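/- arXiv:2404.06321 — 7 statements merged into one kernel-verified Lean document; each statement's English description precedes it below -/
import Mathlib

section
/- Let μ ∈ ℤ^n, suppose B(Λ_n)_μ := {v ∈ B(Λ_n) : wt(v) = μ} is nonempty, and suppose some (equivalently, by the same-singles property, every) element of B(Λ_n)_μ has exactly m < n single entries. Then n − m is even, say n − m = 2k, and the cardinality of B(Λ_n)_μ equals the k-th Catalan number (1/(k+1))·binom(2k, k). -/
namespace Stmt1

/-- Entries of the crystal are coded by natural numbers in `{1, …, 2n}`:
the letter `p ∈ {1, …, n}` is coded by `p`, and the barred letter `p̄`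
is coded by `2n + 1 − p`.  The total order
`1 ≺ 2 ≺ ⋯ ≺ n ≺ n̄ ≺ ⋯ ≺ 1̄` is then the usual order on `{1, …, 2n}`. -/
def BLn (n : ℕ) : Set (Fin n → ℕ) :=
  {v | (∀ k, 1 ≤ v k ∧ v k ≤ 2 * n) ∧ StrictMono v ∧
    ∀ k l : Fin n, v k ≤ n → v l = 2 * n + 1 - v k →
      (k.val + 1) + (n - l.val) ≤ v k}

def entryWt (n : ℕ) (c : ℕ) : Fin n → ℤ := fun j =>
  (if c = j.val + 1 then 1 else 0) - (if c = 2 * n - j.val then 1 else 0)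

def wt (n : ℕ) (v : Fin n → ℕ) : Fin n → ℤ := ∑ k, entryWt n (v k)

def IsSingle (n : ℕ) (v : Fin n → ℕ) (k : Fin n) : Prop :=
  ¬ ∃ l : Fin n, v l = 2 * n + 1 - v k

open Finset

variable {n : ℕ}

def statusOf (n : ℕ) (w : Fin n → ℕ) : Fin n → Bool × Bool :=
  fun j => (decide (∃ k, w k = j.val + 1), decide (∃ k, w k = 2 * n - j.val))

def cnt {n : ℕ} (f : Fin n → Bool × Bool) (j : Fin n) : ℕ := (f j).1.toNat + (f j).2.toNat

def Pf (n : ℕ) (μ : Fin n → ℤ) (f : Fin n → Bool × Bool) : Prop :=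
  (∀ j, ((f j).1.toNat : ℤ) - ((f j).2.toNat : ℤ) = μ j) ∧ (∑ j, cnt f j = n) ∧
    ∀ j, f j = (true, true) → ∑ i ∈ Finset.Iic j, cnt f i ≤ j.val + 1

lemma card_filter_le (w : Fin n → ℕ) (hw : StrictMono w) (hb : ∀ k, 1 ≤ w k ∧ w k ≤ 2 * n)
    (j : Fin n) :
    (univ.filter fun k => w k ≤ j.val + 1).card = ∑ i ∈ Iic j, ((statusOf n w i).1.toNat) := by
  have h1 : ∑ i ∈ Iic j, ((statusOf n w i).1.toNat)
      = ((Iic j).filter fun i => ∃ k, w k = i.val + 1).card := by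
    rw [card_filter]
    refine Finset.sum_congr rfl fun i _ => ?_
    by_cases h : ∃ k, w k = i.val + 1 <;> simp [statusOf, h]
  rw [h1]
  refine Finset.card_bij (fun k hk => ⟨w k - 1, by
      have := (mem_filter.mp hk).2; have := (hb k).1; omega⟩) ?_ ?_ ?_
  · intro k hk
    have h2 := (mem_filter.mp hk).2
    have h3 := (hb k).1
    refine mem_filter.mpr ⟨mem_Iic.mpr (Fin.le_def.mpr ?_), ⟨k, ?_⟩⟩
    · show w k - 1 ≤ j.val; omega
    · show w k = w k - 1 + 1; omega
  · intro a ha b hb' hab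
    have h1 := (hb a).1; have h2 := (hb b).1
    have hab' : w a - 1 = w b - 1 := congrArg Fin.val hab
    exact hw.injective (by omega)
  · intro i hi
    obtain ⟨hij, k, hk⟩ := mem_filter.mp hi
    have hle := mem_Iic.mp hij
    rw [Fin.le_def] at hle
    refine ⟨k, mem_filter.mpr ⟨mem_univ _, by omega⟩, ?_⟩
    exact Fin.ext (show w k - 1 = i.val by omega)

lemma card_filter_ge (w : Fin n → ℕ) (hw : StrictMono w) (hb : ∀ k, 1 ≤ w k ∧ w k ≤ 2 * n)
    (j : Fin n) :
    (univ.filter fun k => 2 * n - j.val ≤ w k).card = ∑ i ∈ Iic j, ((statusOf n w i).2.toNat) := by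
  have h1 : ∑ i ∈ Iic j, ((statusOf n w i).2.toNat)
      = ((Iic j).filter fun i => ∃ k, w k = 2 * n - i.val).card := by
    rw [card_filter]
    refine Finset.sum_congr rfl fun i _ => ?_
    by_cases h : ∃ k, w k = 2 * n - i.val <;> simp [statusOf, h]
  rw [h1]
  have hjn : j.val < n := j.isLt
  refine Finset.card_bij (fun k hk => ⟨2 * n - w k, by
      have := (mem_filter.mp hk).2; have := (hb k).2; omega⟩) ?_ ?_ ?_
  · intro k hk
    have h2 := (mem_filter.mp hk).2
    have h3 := (hb k).2
    refine mem_filter.mpr ⟨mem_Iic.mpr (Fin.le_def.mpr ?_), ⟨k, ?_⟩⟩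
    · show 2 * n - w k ≤ j.val; omega
    · show w k = 2 * n - (2 * n - w k); omega
  · intro a ha b hb' hab
    have h1 := (mem_filter.mp ha).2; have h2 := (mem_filter.mp hb').2
    have h3 := (hb a).2; have h4 := (hb b).2
    have hab' : 2 * n - w a = 2 * n - w b := congrArg Fin.val hab
    exact hw.injective (by omega)
  · intro i hi
    obtain ⟨hij, k, hk⟩ := mem_filter.mp hi
    have hle := mem_Iic.mp hij
    rw [Fin.le_def] at hle
    have hkn : i.val < n := i.isLt
    refine ⟨k, mem_filter.mpr ⟨mem_univ _, by omega⟩, ?_⟩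
    exact Fin.ext (show 2 * n - w k = i.val by omega)

lemma Iic_last (hn : 1 ≤ n) : (Iic (⟨n - 1, by omega⟩ : Fin n)) = univ := by
  ext i; simp only [mem_Iic, mem_univ, iff_true, Fin.le_def]
  have := i.isLt; omega

lemma sum_cnt_statusOf (hn : 1 ≤ n) (w : Fin n → ℕ) (hw : StrictMono w)
    (hb : ∀ k, 1 ≤ w k ∧ w k ≤ 2 * n) : ∑ j, cnt (statusOf n w) j = n := by
  have h1 := card_filter_le w hw hb ⟨n - 1, by omega⟩
  have h2 := card_filter_ge w hw hb ⟨n - 1, by omega⟩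
  rw [Iic_last hn] at h1 h2
  have : ∑ j, cnt (statusOf n w) j
      = ∑ j, ((statusOf n w j).1.toNat) + ∑ j, ((statusOf n w j).2.toNat) := by
    rw [← Finset.sum_add_distrib]; rfl
  rw [this, ← h1, ← h2]
  have e1 : (univ.filter fun k : Fin n => w k ≤ (⟨n - 1, by omega⟩ : Fin n).val + 1)
      = univ.filter fun k : Fin n => w k ≤ n := by
    refine filter_congr fun k _ => ?_
    show w k ≤ n - 1 + 1 ↔ w k ≤ n
    omega
  have e2 : (univ.filter fun k : Fin n => 2 * n - (⟨n - 1, by omega⟩ : Fin n).val ≤ w k)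
      = univ.filter fun k : Fin n => n + 1 ≤ w k := by
    refine filter_congr fun k _ => ?_
    show 2 * n - (n - 1) ≤ w k ↔ n + 1 ≤ w k
    omega
  rw [e1, e2]
  have hdis : Disjoint (univ.filter fun k : Fin n => w k ≤ n)
      (univ.filter fun k : Fin n => n + 1 ≤ w k) := by
    rw [Finset.disjoint_left]
    intro a ha hb'
    have h1 := (mem_filter.mp ha).2; have h2 := (mem_filter.mp hb').2; omega
  have hun : (univ.filter fun k : Fin n => w k ≤ n) ∪ (univ.filter fun k : Fin n => n + 1 ≤ w k)
      = univ := by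
    ext a; simp only [mem_union, mem_filter, mem_univ, true_and, iff_true]
    have := (hb a).1; have := (hb a).2; omega
  have hcard := Finset.card_union_of_disjoint hdis
  rw [hun, card_univ, Fintype.card_fin] at hcard
  omega

lemma card_filter_eq_indicator (w : Fin n → ℕ) (hw : Function.Injective w) (c : ℕ) :
    (univ.filter fun k => w k = c).card = if ∃ k, w k = c then 1 else 0 := by
  split
  · next h =>
    obtain ⟨k0, hk0⟩ := h
    have : (univ.filter fun k => w k = c) = {k0} := by
      ext a
      simp only [mem_filter, mem_univ, true_and, mem_singleton]
      constructor
      · intro ha; exact hw (ha.trans hk0.symm)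
      · rintro rfl; exact hk0
    rw [this, card_singleton]
  · next h =>
    rw [filter_eq_empty_iff.mpr, card_empty]
    intro a _ ha
    exact h ⟨a, ha⟩

lemma wt_eq_status (w : Fin n → ℕ) (hw : Function.Injective w) (j : Fin n) :
    wt n w j = ((statusOf n w j).1.toNat : ℤ) - ((statusOf n w j).2.toNat : ℤ) := by
  have : wt n w j = (∑ k, if w k = j.val + 1 then (1 : ℤ) else 0)
      - (∑ k, if w k = 2 * n - j.val then (1 : ℤ) else 0) := by
    rw [wt]
    rw [Finset.sum_apply]
    rw [← Finset.sum_sub_distrib]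
    exact Finset.sum_congr rfl fun k _ => rfl
  rw [this, Finset.sum_boole, Finset.sum_boole]
  rw [card_filter_eq_indicator w hw (j.val + 1), card_filter_eq_indicator w hw (2 * n - j.val)]
  by_cases h1 : ∃ k, w k = j.val + 1 <;> by_cases h2 : ∃ k, w k = 2 * n - j.val <;>
    simp [statusOf, h1, h2]

def TOf (n : ℕ) (f : Fin n → Bool × Bool) : Finset ℕ :=
  ((univ.filter fun j => (f j).1 = true).image fun j : Fin n => j.val + 1) ∪
    ((univ.filter fun j => (f j).2 = true).image fun j : Fin n => 2 * n - j.val)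

lemma mem_TOf {f : Fin n → Bool × Bool} {c : ℕ} :
    c ∈ TOf n f ↔ (∃ j : Fin n, c = j.val + 1 ∧ (f j).1 = true) ∨
      (∃ j : Fin n, c = 2 * n - j.val ∧ (f j).2 = true) := by
  simp only [TOf, mem_union, mem_image, mem_filter, mem_univ, true_and]
  constructor
  · rintro (⟨j, hj1, hj2⟩ | ⟨j, hj1, hj2⟩)
    · exact Or.inl ⟨j, hj2.symm, hj1⟩
    · exact Or.inr ⟨j, hj2.symm, hj1⟩
  · rintro (⟨j, hj1, hj2⟩ | ⟨j, hj1, hj2⟩)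
    · exact Or.inl ⟨j, hj2, hj1.symm⟩
    · exact Or.inr ⟨j, hj2, hj1.symm⟩

lemma mem_TOf1 {f : Fin n → Bool × Bool} (j : Fin n) :
    j.val + 1 ∈ TOf n f ↔ (f j).1 = true := by
  rw [mem_TOf]
  constructor
  · rintro (⟨j', hj1, hj2⟩ | ⟨j', hj1, hj2⟩)
    · have : j = j' := Fin.ext (by omega)
      rw [this]; exact hj2
    · have h1 : j.val < n := j.isLt
      have h2 : j'.val < n := j'.isLt
      omega
  · intro h; exact Or.inl ⟨j, rfl, h⟩

lemma mem_TOf2 {f : Fin n → Bool × Bool} (j : Fin n) :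
    2 * n - j.val ∈ TOf n f ↔ (f j).2 = true := by
  rw [mem_TOf]
  have h1 : j.val < n := j.isLt
  constructor
  · rintro (⟨j', hj1, hj2⟩ | ⟨j', hj1, hj2⟩)
    · have h2 : j'.val < n := j'.isLt
      omega
    · have h2 : j'.val < n := j'.isLt
      have : j = j' := Fin.ext (by omega)
      rw [this]; exact hj2
  · intro h; exact Or.inr ⟨j, rfl, h⟩

lemma bounds_TOf {f : Fin n → Bool × Bool} {c : ℕ} (hc : c ∈ TOf n f) :
    1 ≤ c ∧ c ≤ 2 * n := by
  rcases mem_TOf.mp hc with ⟨j, hj, -⟩ | ⟨j, hj, -⟩ <;> have := j.isLt <;> omega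

lemma card_TOf {f : Fin n → Bool × Bool} (hsum : ∑ j, cnt f j = n) : (TOf n f).card = n := by
  rw [TOf, Finset.card_union_of_disjoint, Finset.card_image_of_injective _
      (fun a b h => by omega),
    Finset.card_image_of_injOn (fun a _ b _ h => Fin.ext (by
      have := a.isLt; have := b.isLt; omega))]
  · have e1 : (univ.filter fun j : Fin n => (f j).1 = true).card = ∑ j, ((f j).1.toNat) := by
      rw [card_filter]
      refine Finset.sum_congr rfl fun i _ => ?_
      cases h : (f i).1 <;> simp [h]
    have e2 : (univ.filter fun j : Fin n => (f j).2 = true).card = ∑ j, ((f j).2.toNat) := by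
      rw [card_filter]
      refine Finset.sum_congr rfl fun i _ => ?_
      cases h : (f i).2 <;> simp [h]
    rw [e1, e2, ← Finset.sum_add_distrib]
    exact hsum
  · rw [Finset.disjoint_left]
    rintro a ha hb
    simp only [mem_image, mem_filter, mem_univ, true_and] at ha hb
    obtain ⟨j1, -, h1⟩ := ha
    obtain ⟨j2, -, h2⟩ := hb
    have := j1.isLt; have := j2.isLt; omega

def wOf (n : ℕ) (f : Fin n → Bool × Bool) (h : (TOf n f).card = n) : Fin n → ℕ :=
  fun k => ((TOf n f).orderIsoOfFin h k : ℕ)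

lemma wOf_strictMono {f : Fin n → Bool × Bool} (h : (TOf n f).card = n) :
    StrictMono (wOf n f h) :=
  fun a b hab => by exact_mod_cast ((TOf n f).orderIsoOfFin h).strictMono hab

lemma wOf_range {f : Fin n → Bool × Bool} (h : (TOf n f).card = n) (c : ℕ) :
    (∃ k, wOf n f h k = c) ↔ c ∈ TOf n f := by
  constructor
  · rintro ⟨k, rfl⟩
    exact ((TOf n f).orderIsoOfFin h k).2
  · intro hc
    exact ⟨((TOf n f).orderIsoOfFin h).symm ⟨c, hc⟩, by simp [wOf]⟩

lemma wOf_bounds {f : Fin n → Bool × Bool} (h : (TOf n f).card = n) (k : Fin n) :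
    1 ≤ wOf n f h k ∧ wOf n f h k ≤ 2 * n :=
  bounds_TOf ((TOf n f).orderIsoOfFin h k).2

lemma statusOf_wOf {f : Fin n → Bool × Bool} (h : (TOf n f).card = n) :
    statusOf n (wOf n f h) = f := by
  funext j
  have h1 : (∃ k, wOf n f h k = j.val + 1) ↔ (f j).1 = true :=
    (wOf_range h _).trans (mem_TOf1 j)
  have h2 : (∃ k, wOf n f h k = 2 * n - j.val) ↔ (f j).2 = true :=
    (wOf_range h _).trans (mem_TOf2 j)
  have : statusOf n (wOf n f h) j = ((f j).1, (f j).2) := by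
    rw [statusOf]
    congr 1
    · cases hb : (f j).1
      · rw [hb] at h1; simp [h1]
      · rw [hb] at h1; simp [h1]
    · cases hb : (f j).2
      · rw [hb] at h2; simp [h2]
      · rw [hb] at h2; simp [h2]
  rw [this]

lemma Iic_card (j : Fin n) : (Iic j).card = j.val + 1 := by
  rw [Fin.card_Iic]

lemma filter_le_eq_Iic (w : Fin n → ℕ) (hw : StrictMono w) (k : Fin n) :
    (univ.filter fun i => w i ≤ w k) = Iic k := by
  ext i
  simp only [mem_filter, mem_univ, true_and, mem_Iic]
  exact hw.le_iff_le

lemma filter_ge_eq_Ici (w : Fin n → ℕ) (hw : StrictMono w) (l : Fin n) :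
    (univ.filter fun i => w l ≤ w i) = Ici l := by
  ext i
  simp only [mem_filter, mem_univ, true_and, mem_Ici]
  exact hw.le_iff_le

/-- The key two-sided identity: for strict mono bounded `w`, and a "pair" `j`
with positions `k` (of `j+1`) and `l` (of `2n-j`),
`(k+1) + (n-l) = ∑_{i ≤ j} cnt (statusOf w) i`. -/
lemma pos_sum_eq (w : Fin n → ℕ) (hw : StrictMono w) (hb : ∀ k, 1 ≤ w k ∧ w k ≤ 2 * n)
    (j k l : Fin n) (hk : w k = j.val + 1) (hl : w l = 2 * n - j.val) :
    (k.val + 1) + (n - l.val) = ∑ i ∈ Iic j, cnt (statusOf n w) i := by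
  have e1 : (univ.filter fun i => w i ≤ j.val + 1) = Iic k := by
    rw [← hk, filter_le_eq_Iic w hw]
  have e2 : (univ.filter fun i => 2 * n - j.val ≤ w i) = Ici l := by
    rw [← hl, filter_ge_eq_Ici w hw]
  have c1 := card_filter_le w hw hb j
  have c2 := card_filter_ge w hw hb j
  rw [e1, Fin.card_Iic] at c1
  rw [e2, Fin.card_Ici] at c2
  have : ∑ i ∈ Iic j, cnt (statusOf n w) i
      = ∑ i ∈ Iic j, ((statusOf n w i).1.toNat) + ∑ i ∈ Iic j, ((statusOf n w i).2.toNat) := by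
    rw [← Finset.sum_add_distrib]; rfl
  rw [this, ← c1, ← c2]

lemma Pf_of_mem (hn : 1 ≤ n) {μ : Fin n → ℤ} (w : Fin n → ℕ) (hw : w ∈ BLn n)
    (hwt : wt n w = μ) : Pf n μ (statusOf n w) := by
  obtain ⟨hb, hmono, hpair⟩ := hw
  refine ⟨?_, sum_cnt_statusOf hn w hmono hb, ?_⟩
  · intro j
    rw [← wt_eq_status w hmono.injective j, hwt]
  · intro j hj
    have h1 : (statusOf n w j).1 = true := by rw [hj]
    have h2 : (statusOf n w j).2 = true := by rw [hj]
    simp only [statusOf, decide_eq_true_eq] at h1 h2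
    obtain ⟨k, hk⟩ := h1
    obtain ⟨l, hl⟩ := h2
    have hjn : j.val < n := j.isLt
    have hcond := hpair k l (by omega) (by omega)
    rw [← pos_sum_eq w hmono hb j k l hk hl]
    omega

lemma mem_of_Pf (hn : 1 ≤ n) {μ : Fin n → ℤ} (f : Fin n → Bool × Bool) (hf : Pf n μ f) :
    wOf n f (card_TOf hf.2.1) ∈ BLn n ∧ wt n (wOf n f (card_TOf hf.2.1)) = μ := by
  set h := card_TOf hf.2.1
  have hmono := wOf_strictMono h
  have hb := wOf_bounds h
  have hstat := statusOf_wOf h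
  constructor
  · refine ⟨hb, hmono, ?_⟩
    intro k l hkn hl
    have h1 : 1 ≤ wOf n f h k := (hb k).1
    set j : Fin n := ⟨wOf n f h k - 1, by omega⟩ with hjdef
    have hk : wOf n f h k = j.val + 1 := by simp [hjdef]; omega
    have hl' : wOf n f h l = 2 * n - j.val := by simp [hjdef]; omega
    have hf1 : (f j).1 = true := by
      rw [← mem_TOf1 j, ← wOf_range h]; exact ⟨k, hk⟩
    have hf2 : (f j).2 = true := by
      rw [← mem_TOf2 j, ← wOf_range h]; exact ⟨l, hl'⟩
    have hfj : f j = (true, true) := by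
      have := Prod.mk.eta (p := f j)
      rw [← this, hf1, hf2]
    have hsum := hf.2.2 j hfj
    have hpos := pos_sum_eq (wOf n f h) hmono hb j k l hk hl'
    rw [hstat] at hpos
    omega
  · funext j
    rw [wt_eq_status _ hmono.injective j, hstat]
    exact hf.1 j

lemma wOf_statusOf (hn : 1 ≤ n) (w : Fin n → ℕ) (hmono : StrictMono w)
    (hb : ∀ k, 1 ≤ w k ∧ w k ≤ 2 * n) (h : (TOf n (statusOf n w)).card = n) :
    wOf n (statusOf n w) h = w := by
  have hrange : Set.range (wOf n (statusOf n w) h) = Set.range w := by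
    ext c
    simp only [Set.mem_range]
    rw [wOf_range h c, mem_TOf]
    constructor
    · rintro (⟨j, rfl, hj⟩ | ⟨j, rfl, hj⟩) <;> simp only [statusOf, decide_eq_true_eq] at hj <;>
        obtain ⟨k, hk⟩ := hj <;> exact ⟨k, hk⟩
    · rintro ⟨k, rfl⟩
      have h1 := (hb k).1; have h2 := (hb k).2
      by_cases hc : w k ≤ n
      · refine Or.inl ⟨⟨w k - 1, by omega⟩, show w k = w k - 1 + 1 by omega, ?_⟩
        simp only [statusOf, decide_eq_true_eq]
        exact ⟨k, show w k = w k - 1 + 1 by omega⟩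
      · refine Or.inr ⟨⟨2 * n - w k, by omega⟩, show w k = 2 * n - (2 * n - w k) by omega, ?_⟩
        simp only [statusOf, decide_eq_true_eq]
        exact ⟨k, show w k = 2 * n - (2 * n - w k) by omega⟩
  haveI i : WellFoundedLT (Fin n) := inferInstance
  exact (@StrictMono.range_inj (Fin n) ℕ _ _ i _ _ (wOf_strictMono h) hmono).mp hrange

def equivAB (hn : 1 ≤ n) (μ : Fin n → ℤ) :
    {w : Fin n → ℕ // w ∈ BLn n ∧ wt n w = μ} ≃ {f : Fin n → Bool × Bool // Pf n μ f} where
  toFun := fun ⟨w, hw⟩ => ⟨statusOf n w, Pf_of_mem hn w hw.1 hw.2⟩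
  invFun := fun ⟨f, hf⟩ => ⟨wOf n f (card_TOf hf.2.1), mem_of_Pf hn f hf⟩
  left_inv := fun ⟨w, hw⟩ => Subtype.ext (wOf_statusOf hn w hw.1.2.1 hw.1.1 (card_TOf (Pf_of_mem hn w hw.1 hw.2).2.1))
  right_inv := fun ⟨f, hf⟩ => Subtype.ext (statusOf_wOf _)

section BC

variable {μ : Fin n → ℤ}

def Zset (n : ℕ) (μ : Fin n → ℤ) : Finset (Fin n) := univ.filter fun j => μ j = 0

noncomputable def eIso (n : ℕ) (μ : Fin n → ℤ) : Fin (Zset n μ).card ≃o ↥(Zset n μ) :=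
  (Zset n μ).orderIsoOfFin rfl

def Pg (N K : ℕ) (g : Fin N → Bool) : Prop :=
  (univ.filter fun i => g i = true).card = K ∧
    ∀ i, g i = true →
      ((Iic i).filter fun i' => g i' = true).card ≤ ((Iic i).filter fun i' => g i' = false).card

lemma det_of_diff {f : Fin n → Bool × Bool}
    (h : ∀ j, ((f j).1.toNat : ℤ) - ((f j).2.toNat : ℤ) = μ j) (j : Fin n) :
    (μ j = 1 → f j = (true, false)) ∧ (μ j = -1 → f j = (false, true)) ∧
      (μ j = 0 → f j = ((f j).1, (f j).1)) := by
  have hj := h j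
  rcases hf : f j with ⟨a, b⟩
  rw [hf] at hj
  cases a <;> cases b <;> simp at hj <;> refine ⟨?_, ?_, ?_⟩ <;> intro h0 <;> simp_all <;> omega

lemma murange_of_diff {f : Fin n → Bool × Bool}
    (h : ∀ j, ((f j).1.toNat : ℤ) - ((f j).2.toNat : ℤ) = μ j) (j : Fin n) :
    μ j = -1 ∨ μ j = 0 ∨ μ j = 1 := by
  have hj := h j
  rcases hf : f j with ⟨a, b⟩
  rw [hf] at hj
  cases a <;> cases b <;> simp at hj <;> omega

lemma cnt_formula {f : Fin n → Bool × Bool}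
    (h : ∀ j, ((f j).1.toNat : ℤ) - ((f j).2.toNat : ℤ) = μ j) (j : Fin n) :
    cnt f j = (if ¬ (μ j = 0) then 1 else 0)
      + 2 * (if μ j = 0 ∧ (f j).1 = true then 1 else 0) := by
  obtain ⟨d1, d2, d3⟩ := det_of_diff h j
  rcases murange_of_diff h j with h0 | h0 | h0
  · simp [cnt, d2 h0, h0]
  · have h3 := d3 h0
    cases hb : (f j).1
    · rw [hb] at h3; simp [cnt, h3, h0, hb]
    · rw [hb] at h3; simp [cnt, h3, h0, hb]
  · simp [cnt, d1 h0, h0]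

lemma sum_cnt_split {f : Fin n → Bool × Bool}
    (h : ∀ j, ((f j).1.toNat : ℤ) - ((f j).2.toNat : ℤ) = μ j) (s : Finset (Fin n)) :
    ∑ x ∈ s, cnt f x = (s.filter fun x => ¬ (μ x = 0)).card
      + 2 * (s.filter fun x => μ x = 0 ∧ (f x).1 = true).card := by
  rw [card_filter, card_filter, Finset.mul_sum, ← Finset.sum_add_distrib]
  exact Finset.sum_congr rfl fun x _ => cnt_formula h x

lemma split_aux (s : Finset (Fin n)) (f : Fin n → Bool × Bool) :
    (s.filter fun x => ¬ (μ x = 0)).card + (s.filter fun x => μ x = 0 ∧ (f x).1 = true).card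
      + (s.filter fun x => μ x = 0 ∧ (f x).1 = false).card = s.card := by
  have h1 := Finset.card_filter_add_card_filter_not (s := s) (p := fun x => μ x = 0)
  have h2 := Finset.card_filter_add_card_filter_not
    (s := s.filter fun x => μ x = 0) (p := fun x => (f x).1 = true)
  rw [filter_filter, filter_filter] at h2
  have h3 : (s.filter fun x => μ x = 0 ∧ ¬ (f x).1 = true)
      = s.filter fun x => μ x = 0 ∧ (f x).1 = false := by
    refine filter_congr fun x _ => ?_
    simp [Bool.not_eq_true]
  rw [h3] at h2
  omega

lemma prefix_iff {f : Fin n → Bool × Bool}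
    (h : ∀ j, ((f j).1.toNat : ℤ) - ((f j).2.toNat : ℤ) = μ j) (j : Fin n) :
    (∑ i ∈ Iic j, cnt f i ≤ j.val + 1) ↔
      ((Iic j).filter fun x => μ x = 0 ∧ (f x).1 = true).card ≤
        ((Iic j).filter fun x => μ x = 0 ∧ (f x).1 = false).card := by
  rw [sum_cnt_split h (Iic j)]
  have := split_aux (μ := μ) (Iic j) f
  rw [Fin.card_Iic] at this
  omega

lemma mem_Zset_iff {j : Fin n} : j ∈ Zset n μ ↔ μ j = 0 := by
  simp [Zset]

lemma e_card_Iic (q : Fin n → Prop) [DecidablePred q] (i : Fin (Zset n μ).card) :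
    ((Iic i).filter fun i' => q ((eIso n μ i' : Fin n))).card
      = ((Iic ((eIso n μ i : Fin n))).filter fun x => μ x = 0 ∧ q x).card := by
  refine Finset.card_bij (fun i' _ => (eIso n μ i' : Fin n)) ?_ ?_ ?_
  · intro i' hi'
    obtain ⟨h1, h2⟩ := mem_filter.mp hi'
    refine mem_filter.mpr ⟨mem_Iic.mpr ?_, mem_Zset_iff.mp (eIso n μ i').2, h2⟩
    exact Subtype.coe_le_coe.mpr ((eIso n μ).le_iff_le.mpr (mem_Iic.mp h1))
  · intro a _ b _ hab
    exact (eIso n μ).injective (Subtype.val_injective hab)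
  · intro x hx
    obtain ⟨h1, h2, h3⟩ := mem_filter.mp hx
    have hxZ : x ∈ Zset n μ := mem_Zset_iff.mpr h2
    refine ⟨(eIso n μ).symm ⟨x, hxZ⟩, ?_, by simp⟩
    refine mem_filter.mpr ⟨mem_Iic.mpr ?_, by simp [h3]⟩
    rw [← (eIso n μ).le_iff_le, (eIso n μ).apply_symm_apply]
    exact Subtype.coe_le_coe.mp (by simpa using mem_Iic.mp h1)

lemma e_card_univ (q : Fin n → Prop) [DecidablePred q] :
    (univ.filter fun i' => q ((eIso n μ i' : Fin n))).card
      = (univ.filter fun x => μ x = 0 ∧ q x).card := by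
  refine Finset.card_bij (fun i' _ => (eIso n μ i' : Fin n)) ?_ ?_ ?_
  · intro i' hi'
    obtain ⟨-, h2⟩ := mem_filter.mp hi'
    exact mem_filter.mpr ⟨mem_univ _, mem_Zset_iff.mp (eIso n μ i').2, h2⟩
  · intro a _ b _ hab
    exact (eIso n μ).injective (Subtype.val_injective hab)
  · intro x hx
    obtain ⟨-, h2, h3⟩ := mem_filter.mp hx
    have hxZ : x ∈ Zset n μ := mem_Zset_iff.mpr h2
    exact ⟨(eIso n μ).symm ⟨x, hxZ⟩, mem_filter.mpr ⟨mem_univ _, by simp [h3]⟩, by simp⟩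

end BC

section BC2

variable {μ : Fin n → ℤ}

noncomputable def fOf (n : ℕ) (μ : Fin n → ℤ) (g : Fin (Zset n μ).card → Bool) :
    Fin n → Bool × Bool :=
  fun j => if h0 : μ j = 0 then
      (g ((eIso n μ).symm ⟨j, mem_Zset_iff.mpr h0⟩), g ((eIso n μ).symm ⟨j, mem_Zset_iff.mpr h0⟩))
    else if μ j = 1 then (true, false) else (false, true)

lemma fOf_e (g : Fin (Zset n μ).card → Bool) (i : Fin (Zset n μ).card) :
    fOf n μ g ((eIso n μ i : Fin n)) = (g i, g i) := by
  have h0 : μ (eIso n μ i : Fin n) = 0 := mem_Zset_iff.mp (eIso n μ i).2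
  have key : (eIso n μ).symm ⟨(eIso n μ i : Fin n), mem_Zset_iff.mpr h0⟩ = i := by
    rw [show (⟨(eIso n μ i : Fin n), mem_Zset_iff.mpr h0⟩ : ↥(Zset n μ)) = eIso n μ i from
      Subtype.ext rfl, OrderIso.symm_apply_apply]
  simp only [fOf, dif_pos h0, key]

lemma fOf_diff (hμ : ∀ j, μ j = -1 ∨ μ j = 0 ∨ μ j = 1) (g : Fin (Zset n μ).card → Bool) :
    ∀ j, ((fOf n μ g j).1.toNat : ℤ) - ((fOf n μ g j).2.toNat : ℤ) = μ j := by
  intro j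
  rcases hμ j with h0 | h0 | h0
  · rw [fOf, dif_neg (by omega), if_neg (by omega), h0]; simp
  · rw [fOf, dif_pos h0, h0]; cases g ((eIso n μ).symm ⟨j, mem_Zset_iff.mpr h0⟩) <;> simp
  · rw [fOf, dif_neg (by omega), if_pos h0, h0]; simp

lemma Pg_of_Pf {K : ℕ} (hK : n = (univ.filter fun x : Fin n => ¬ (μ x = 0)).card + 2 * K)
    (f : Fin n → Bool × Bool) (hf : Pf n μ f) :
    Pg (Zset n μ).card K (fun i => (f ((eIso n μ i : Fin n))).1) := by
  have hd := hf.1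
  refine ⟨?_, ?_⟩
  · show (univ.filter fun i => (f ((eIso n μ i : Fin n))).1 = true).card = K
    have hs := hf.2.1
    rw [sum_cnt_split hd univ] at hs
    have he := e_card_univ (μ := μ) (fun x => (f x).1 = true)
    omega
  · intro i hgi
    show ((Iic i).filter fun i' => (f ((eIso n μ i' : Fin n))).1 = true).card ≤
      ((Iic i).filter fun i' => (f ((eIso n μ i' : Fin n))).1 = false).card
    have hgi' : (f ((eIso n μ i : Fin n))).1 = true := hgi
    have h0 : μ ((eIso n μ i : Fin n)) = 0 := mem_Zset_iff.mp (eIso n μ i).2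
    have hfj : f ((eIso n μ i : Fin n)) = (true, true) := by
      have hdet := (det_of_diff hd _).2.2 h0
      rw [hdet, hgi']
    have hsum := hf.2.2 _ hfj
    have hiff := (prefix_iff hd _).mp hsum
    have e1 := e_card_Iic (μ := μ) (fun x => (f x).1 = true) i
    have e2 := e_card_Iic (μ := μ) (fun x => (f x).1 = false) i
    rw [e1, e2]
    exact hiff

lemma Pf_of_Pg (hμ : ∀ j, μ j = -1 ∨ μ j = 0 ∨ μ j = 1) {K : ℕ}
    (hK : n = (univ.filter fun x : Fin n => ¬ (μ x = 0)).card + 2 * K)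
    (g : Fin (Zset n μ).card → Bool) (hg : Pg (Zset n μ).card K g) : Pf n μ (fOf n μ g) := by
  have hd := fOf_diff hμ g
  refine ⟨hd, ?_, ?_⟩
  · rw [sum_cnt_split hd univ]
    have e0 := e_card_univ (μ := μ) (fun x => (fOf n μ g x).1 = true)
    have hc : (univ.filter fun i => (fOf n μ g ((eIso n μ i : Fin n))).1 = true)
        = univ.filter fun i => g i = true := by
      refine filter_congr fun i _ => ?_
      rw [fOf_e]
    rw [hc, hg.1] at e0
    omega
  · intro j hfj
    have h0 : μ j = 0 := by
      rcases hμ j with h0 | h0 | h0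
      · have := (det_of_diff hd j).2.1 h0; rw [this] at hfj; simp at hfj
      · exact h0
      · have := (det_of_diff hd j).1 h0; rw [this] at hfj; simp at hfj
    have hjZ : j ∈ Zset n μ := mem_Zset_iff.mpr h0
    set i := (eIso n μ).symm ⟨j, hjZ⟩ with hidef
    have hei : (eIso n μ i : Fin n) = j := by
      rw [hidef, OrderIso.apply_symm_apply]
    have hgi : g i = true := by
      have hh := fOf_e g i
      rw [hei, hfj] at hh
      have := congrArg Prod.fst hh
      exact this.symm
    have hpg := hg.2 i hgi
    rw [prefix_iff hd j]
    have e1 := e_card_Iic (μ := μ) (fun x => (fOf n μ g x).1 = true) i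
    have e2 := e_card_Iic (μ := μ) (fun x => (fOf n μ g x).1 = false) i
    rw [hei] at e1 e2
    rw [← e1, ← e2]
    have c1 : ((Iic i).filter fun i' => (fOf n μ g ((eIso n μ i' : Fin n))).1 = true)
        = (Iic i).filter fun i' => g i' = true := by
      refine filter_congr fun i' _ => ?_
      rw [fOf_e]
    have c2 : ((Iic i).filter fun i' => (fOf n μ g ((eIso n μ i' : Fin n))).1 = false)
        = (Iic i).filter fun i' => g i' = false := by
      refine filter_congr fun i' _ => ?_
      rw [fOf_e]
    rw [c1, c2]
    exact hpg

lemma fOf_toFun (hμ : ∀ j, μ j = -1 ∨ μ j = 0 ∨ μ j = 1) (f : Fin n → Bool × Bool)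
    (hd : ∀ j, ((f j).1.toNat : ℤ) - ((f j).2.toNat : ℤ) = μ j) :
    fOf n μ (fun i => (f ((eIso n μ i : Fin n))).1) = f := by
  funext j
  by_cases h0 : μ j = 0
  · have hjZ : j ∈ Zset n μ := mem_Zset_iff.mpr h0
    have hei : eIso n μ ((eIso n μ).symm ⟨j, mem_Zset_iff.mpr h0⟩)
        = ⟨j, mem_Zset_iff.mpr h0⟩ := OrderIso.apply_symm_apply _ _
    rw [fOf, dif_pos h0, hei]
    exact ((det_of_diff hd j).2.2 h0).symm
  · rcases hμ j with h1 | h1 | h1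
    · rw [fOf, dif_neg h0, if_neg (by omega)]
      exact ((det_of_diff hd j).2.1 h1).symm
    · exact absurd h1 h0
    · rw [fOf, dif_neg h0, if_pos h1]
      exact ((det_of_diff hd j).1 h1).symm

noncomputable def equivBC (hμ : ∀ j, μ j = -1 ∨ μ j = 0 ∨ μ j = 1) (K : ℕ)
    (hK : n = (univ.filter fun x : Fin n => ¬ (μ x = 0)).card + 2 * K) :
    {f : Fin n → Bool × Bool // Pf n μ f} ≃
      {g : Fin (Zset n μ).card → Bool // Pg (Zset n μ).card K g} where
  toFun := fun ⟨f, hf⟩ => ⟨fun i => (f ((eIso n μ i : Fin n))).1, Pg_of_Pf hK f hf⟩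
  invFun := fun ⟨g, hg⟩ => ⟨fOf n μ g, Pf_of_Pg hμ hK g hg⟩
  left_inv := fun ⟨f, hf⟩ => Subtype.ext (fOf_toFun hμ f hf.1)
  right_inv := fun ⟨g, hg⟩ => Subtype.ext (funext fun i => by
    show (fOf n μ g ((eIso n μ i : Fin n))).1 = g i
    rw [fOf_e])

end BC2

section Lists

open List

lemma count_ofFn {α : Type*} [DecidableEq α] :
    ∀ {N : ℕ} (h : Fin N → α) (x : α),
      (List.ofFn h).count x = (univ.filter fun i => h i = x).card
  | 0, h, x => by simp
  | N + 1, h, x => by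
    rw [List.ofFn_succ, List.count_cons, count_ofFn (fun i => h i.succ) x]
    rw [card_filter, card_filter, Fin.sum_univ_succ]
    by_cases h0 : h 0 = x <;> simp [h0] <;> omega

lemma count_take_ofFn {α : Type*} [DecidableEq α] {N : ℕ} (h : Fin N → α) (x : α)
    {m : ℕ} (hm : m ≤ N) :
    ((List.ofFn h).take m).count x = (univ.filter fun i : Fin N => i.val < m ∧ h i = x).card := by
  rw [← Fin.ofFn_take_eq_take_ofFn hm, count_ofFn]
  refine Finset.card_bij (fun i _ => Fin.castLE hm i) ?_ ?_ ?_
  · intro i hi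
    refine Finset.mem_filter.mpr ⟨mem_univ _, i.isLt, ?_⟩
    exact (Finset.mem_filter.mp hi).2
  · intro a _ b _ hab
    exact Fin.castLE_injective hm hab
  · intro x' hx'
    obtain ⟨-, h1, h2⟩ := Finset.mem_filter.mp hx'
    exact ⟨⟨x'.val, h1⟩, Finset.mem_filter.mpr ⟨mem_univ _, h2⟩, Fin.ext rfl⟩

lemma ballot {N : ℕ} (g : Fin N → Bool)
    (hp : ∀ i, g i = true → ((Iic i).filter fun i' => g i' = true).card ≤
      ((Iic i).filter fun i' => g i' = false).card) (m : ℕ) :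
    (univ.filter fun i : Fin N => i.val < m ∧ g i = true).card ≤
      (univ.filter fun i : Fin N => i.val < m ∧ g i = false).card := by
  induction m with
  | zero => simp
  | succ m ih =>
    by_cases hm : m < N
    · have hIic : ∀ b : Bool, (univ.filter fun i : Fin N => i.val < m + 1 ∧ g i = b)
          = (Iic (⟨m, hm⟩ : Fin N)).filter fun i' => g i' = b := by
        intro b
        ext x
        simp only [Finset.mem_filter, mem_univ, true_and, mem_Iic, Fin.le_def]
        constructor
        · rintro ⟨h1, h2⟩; exact ⟨by omega, h2⟩
        · rintro ⟨h1, h2⟩; exact ⟨by omega, h2⟩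
      cases hg0 : g ⟨m, hm⟩
      · have hA : (univ.filter fun i : Fin N => i.val < m + 1 ∧ g i = true)
            = univ.filter fun i : Fin N => i.val < m ∧ g i = true := by
          refine filter_congr fun x _ => ?_
          constructor
          · rintro ⟨h1, h2⟩
            refine ⟨?_, h2⟩
            rcases Nat.lt_succ_iff_lt_or_eq.mp h1 with h | h
            · exact h
            · exfalso
              have hx : x = ⟨m, hm⟩ := Fin.ext h
              rw [hx, hg0] at h2
              cases h2
          · rintro ⟨h1, h2⟩; exact ⟨by omega, h2⟩
        have hB : (univ.filter fun i : Fin N => i.val < m ∧ g i = false)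
            ⊆ univ.filter fun i : Fin N => i.val < m + 1 ∧ g i = false := by
          intro x hx
          obtain ⟨-, h1, h2⟩ := Finset.mem_filter.mp hx
          exact Finset.mem_filter.mpr ⟨mem_univ _, by omega, h2⟩
        rw [hA]
        exact ih.trans (Finset.card_le_card hB)
      · rw [hIic true, hIic false]
        exact hp ⟨m, hm⟩ hg0
    · have hstab : ∀ b : Bool, (univ.filter fun i : Fin N => i.val < m + 1 ∧ g i = b)
          = univ.filter fun i : Fin N => i.val < m ∧ g i = b := by
        intro b
        refine filter_congr fun x _ => ?_
        have := x.isLt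
        constructor
        · rintro ⟨h1, h2⟩; exact ⟨by omega, h2⟩
        · rintro ⟨h1, h2⟩; exact ⟨by omega, h2⟩
      rw [hstab true, hstab false]
      exact ih

lemma length_eq_counts (l : List DyckStep) :
    l.length = l.count DyckStep.U + l.count DyckStep.D := by
  induction l with
  | nil => simp
  | cons a t ih => cases a <;> simp [List.count_cons, ih] <;> omega

end Lists

section CD

open DyckStep

lemma ofFn_get' {α : Type*} (l : List α) {N : ℕ} (hlen : l.length = N) :
    List.ofFn (fun i : Fin N => l.get ⟨i.val, hlen ▸ i.isLt⟩) = l := by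
  apply List.ext_get
  · simp [hlen]
  · intro i h1 h2
    simp [List.get_ofFn]

lemma hD_iff {N : ℕ} (g : Fin N → Bool) (i : Fin N) :
    ((if g i then D else U) = D) ↔ g i = true := by cases g i <;> simp
lemma hU_iff {N : ℕ} (g : Fin N → Bool) (i : Fin N) :
    ((if g i then D else U) = U) ↔ g i = false := by cases g i <;> simp

lemma count_false {N K : ℕ} (hN : N = 2 * K) (g : Fin N → Bool)
    (h1 : (univ.filter fun i => g i = true).card = K) :
    (univ.filter fun i => g i = false).card = K := by
  have hpart := Finset.card_filter_add_card_filter_not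
    (s := (univ : Finset (Fin N))) (p := fun i => g i = true)
  have hcongr : (univ.filter fun i : Fin N => ¬ (g i = true))
      = univ.filter fun i => g i = false := by
    refine filter_congr fun x _ => ?_
    simp [Bool.not_eq_true]
  rw [hcongr, card_univ, Fintype.card_fin] at hpart
  omega

noncomputable def dyckOf {N K : ℕ} (hN : N = 2 * K) (g : Fin N → Bool) (hg : Pg N K g) :
    DyckWord where
  toList := List.ofFn (fun i => if g i then D else U)
  count_U_eq_count_D := by
    rw [count_ofFn, count_ofFn]
    have e1 : (univ.filter fun i : Fin N => (if g i then D else U) = D)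
        = univ.filter fun i => g i = true := filter_congr fun x _ => by rw [hD_iff]
    have e2 : (univ.filter fun i : Fin N => (if g i then D else U) = U)
        = univ.filter fun i => g i = false := filter_congr fun x _ => by rw [hU_iff]
    rw [e1, e2, hg.1, count_false hN g hg.1]
  count_D_le_count_U := by
    intro m
    rcases le_or_gt m N with hm | hm
    · rw [count_take_ofFn _ D hm, count_take_ofFn _ U hm]
      have e1 : (univ.filter fun i : Fin N => i.val < m ∧ (if g i then D else U) = D)
          = univ.filter fun i => i.val < m ∧ g i = true :=
        filter_congr fun x _ => by rw [hD_iff]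
      have e2 : (univ.filter fun i : Fin N => i.val < m ∧ (if g i then D else U) = U)
          = univ.filter fun i => i.val < m ∧ g i = false :=
        filter_congr fun x _ => by rw [hU_iff]
      rw [e1, e2]
      exact ballot g hg.2 m
    · rw [List.take_of_length_le (by rw [List.length_ofFn]; omega)]
      rw [count_ofFn, count_ofFn]
      have e1 : (univ.filter fun i : Fin N => (if g i then D else U) = D)
          = univ.filter fun i => g i = true := filter_congr fun x _ => by rw [hD_iff]
      have e2 : (univ.filter fun i : Fin N => (if g i then D else U) = U)
          = univ.filter fun i => g i = false := filter_congr fun x _ => by rw [hU_iff]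
      rw [e1, e2, hg.1, count_false hN g hg.1]

lemma dyckOf_semilength {N K : ℕ} (hN : N = 2 * K) (g : Fin N → Bool) (hg : Pg N K g) :
    (dyckOf hN g hg).semilength = K := by
  show (List.ofFn (fun i => if g i then D else U)).count U = K
  rw [count_ofFn]
  have e2 : (univ.filter fun i : Fin N => (if g i then D else U) = U)
      = univ.filter fun i => g i = false := filter_congr fun x _ => by rw [hU_iff]
  rw [e2, count_false hN g hg.1]

def gOf {N : ℕ} (p : DyckWord) (hlen : p.toList.length = N) : Fin N → Bool :=
  fun i => decide (p.toList.get ⟨i.val, hlen ▸ i.isLt⟩ = D)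

lemma Pg_gOf {N K : ℕ} (hN : N = 2 * K) (p : DyckWord) (hp : p.semilength = K)
    (hlen : p.toList.length = N) : Pg N K (gOf p hlen) := by
  have hofn := ofFn_get' p.toList hlen
  constructor
  · have hc := count_ofFn (fun i : Fin N => p.toList.get ⟨i.val, hlen ▸ i.isLt⟩) D
    rw [hofn] at hc
    have e1 : (univ.filter fun i : Fin N => p.toList.get ⟨i.val, hlen ▸ i.isLt⟩ = D)
        = univ.filter fun i => gOf p hlen i = true := by
      refine filter_congr fun x _ => ?_
      simp [gOf]
    rw [e1] at hc
    rw [← hc, ← DyckWord.semilength_eq_count_D, hp]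
  · intro i hgi
    have hcdu := p.count_D_le_count_U (i.val + 1)
    rw [← hofn] at hcdu
    rw [count_take_ofFn _ D (by omega), count_take_ofFn _ U (by omega)] at hcdu
    have e1 : ((Iic i).filter fun i' => gOf p hlen i' = true)
        = univ.filter fun x : Fin N =>
            x.val < i.val + 1 ∧ p.toList.get ⟨x.val, hlen ▸ x.isLt⟩ = D := by
      ext x
      simp only [Finset.mem_filter, mem_univ, true_and, mem_Iic, Fin.le_def, gOf,
        decide_eq_true_eq]
      constructor
      · rintro ⟨a, b⟩; exact ⟨by omega, b⟩
      · rintro ⟨a, b⟩; exact ⟨by omega, b⟩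
    have e2 : ((Iic i).filter fun i' => gOf p hlen i' = false)
        = univ.filter fun x : Fin N =>
            x.val < i.val + 1 ∧ p.toList.get ⟨x.val, hlen ▸ x.isLt⟩ = U := by
      ext x
      simp only [Finset.mem_filter, mem_univ, true_and, mem_Iic, Fin.le_def, gOf,
        decide_eq_false_iff_not]
      constructor
      · rintro ⟨a, b⟩
        refine ⟨by omega, ?_⟩
        rcases (p.toList.get ⟨x.val, hlen ▸ x.isLt⟩).dichotomy with h | h
        · exact h
        · exact absurd h b
      · rintro ⟨a, b⟩
        refine ⟨by omega, ?_⟩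
        rw [b]
        simp
    rw [e1, e2]
    exact hcdu

lemma ofFn_if_gOf {N : ℕ} (p : DyckWord) (hlen : p.toList.length = N) :
    List.ofFn (fun i : Fin N => if gOf p hlen i then DyckStep.D else DyckStep.U) = p.toList := by
  have hpt : ∀ i : Fin N, (if gOf p hlen i then DyckStep.D else DyckStep.U)
      = p.toList.get ⟨i.val, hlen ▸ i.isLt⟩ := by
    intro i
    unfold gOf
    rcases (p.toList.get ⟨i.val, hlen ▸ i.isLt⟩).dichotomy with h | h <;> rw [h] <;> simp
  rw [show (fun i : Fin N => if gOf p hlen i then DyckStep.D else DyckStep.U)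
      = (fun i : Fin N => p.toList.get ⟨i.val, hlen ▸ i.isLt⟩) from funext hpt]
  exact ofFn_get' p.toList hlen

lemma get_ofFn' {α : Type*} {N : ℕ} (h : Fin N → α) (i : ℕ) (hi : i < (List.ofFn h).length)
    (hiN : i < N) : (List.ofFn h).get ⟨i, hi⟩ = h ⟨i, hiN⟩ := by
  rw [List.get_ofFn]
  exact congrArg h (Fin.ext rfl)

noncomputable def equivCD {N K : ℕ} (hN : N = 2 * K) :
    {g : Fin N → Bool // Pg N K g} ≃ {p : DyckWord // p.semilength = K} where
  toFun := fun ⟨g, hg⟩ => ⟨dyckOf hN g hg, dyckOf_semilength hN g hg⟩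
  invFun := fun ⟨p, hp⟩ => ⟨gOf p (by rw [← DyckWord.two_mul_semilength_eq_length, hp, hN]),
    Pg_gOf hN p hp _⟩
  left_inv := fun ⟨g, hg⟩ => by
    refine Subtype.ext (funext fun i => ?_)
    show decide ((List.ofFn fun i => if g i then D else U).get ⟨i.val, by rw [List.length_ofFn]; exact i.isLt⟩ = D) = g i
    rw [get_ofFn' (fun i => if g i then D else U) i.val _ i.isLt]
    rw [Fin.eta]
    cases hgi : g i <;> simp
  right_inv := fun ⟨p, hp⟩ => Subtype.ext (DyckWord.ext (ofFn_if_gOf p _))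

end CD

lemma singles_card (hn : 1 ≤ n) {μ : Fin n → ℤ} (v : Fin n → ℕ) (hv : v ∈ BLn n)
    [DecidablePred (IsSingle n v)]
    (hwd : ∀ j, (((statusOf n v j).1.toNat : ℤ) - ((statusOf n v j).2.toNat : ℤ)) = μ j) :
    (univ.filter fun k => IsSingle n v k).card = (univ.filter fun j => ¬ (μ j = 0)).card := by
  obtain ⟨hb, hmono, -⟩ := hv
  have hs1 : ∀ j : Fin n, (statusOf n v j).1 = true ↔ ∃ k, v k = j.val + 1 := by
    intro j; simp [statusOf]
  have hs2 : ∀ j : Fin n, (statusOf n v j).2 = true ↔ ∃ k, v k = 2 * n - j.val := by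
    intro j; simp [statusOf]
  have hmu0 : ∀ j, (μ j = 0) ↔ (statusOf n v j).1 = (statusOf n v j).2 := by
    intro j
    have := hwd j
    cases h1 : (statusOf n v j).1 <;> cases h2 : (statusOf n v j).2 <;>
      rw [h1, h2] at this <;> simp_all <;> omega
  refine Finset.card_bij (fun k _ => if h : v k ≤ n then
      (⟨v k - 1, by have := (hb k).1; omega⟩ : Fin n)
    else ⟨2 * n - v k, by have := (hb k).2; omega⟩) ?_ ?_ ?_
  · intro k hk
    have hsing := (Finset.mem_filter.mp hk).2
    have hb1 := (hb k).1
    have hb2 := (hb k).2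
    refine Finset.mem_filter.mpr ⟨mem_univ _, ?_⟩
    beta_reduce
    by_cases h : v k ≤ n
    · rw [dif_pos h, hmu0]
      have e1 : (statusOf n v ⟨v k - 1, by omega⟩).1 = true := (hs1 _).mpr ⟨k, show v k = v k - 1 + 1 by omega⟩
      have e2 : (statusOf n v ⟨v k - 1, by omega⟩).2 = false := by
        rw [← Bool.not_eq_true, hs2]
        intro ⟨l, hl⟩
        exact hsing ⟨l, by dsimp at hl; omega⟩
      rw [e1, e2]; simp
    · rw [dif_neg h, hmu0]
      have e2 : (statusOf n v ⟨2 * n - v k, by omega⟩).2 = true := (hs2 _).mpr ⟨k, show v k = 2 * n - (2 * n - v k) by omega⟩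
      have e1 : (statusOf n v ⟨2 * n - v k, by omega⟩).1 = false := by
        rw [← Bool.not_eq_true, hs1]
        intro ⟨l, hl⟩
        exact hsing ⟨l, by dsimp at hl; omega⟩
      rw [e1, e2]; simp
  · intro a ha b hbm hab
    have hsa := (Finset.mem_filter.mp ha).2
    beta_reduce at hab
    have ha1 := (hb a).1; have ha2 := (hb a).2
    have hb1 := (hb b).1; have hb2 := (hb b).2
    by_cases h : v a ≤ n <;> by_cases h' : v b ≤ n
    · rw [dif_pos h, dif_pos h'] at hab
      have : v a - 1 = v b - 1 := congrArg Fin.val hab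
      exact hmono.injective (by omega)
    · rw [dif_pos h, dif_neg h'] at hab
      have : v a - 1 = 2 * n - v b := congrArg Fin.val hab
      exact absurd ⟨b, by omega⟩ hsa
    · rw [dif_neg h, dif_pos h'] at hab
      have : 2 * n - v a = v b - 1 := congrArg Fin.val hab
      exact absurd ⟨b, by omega⟩ hsa
    · rw [dif_neg h, dif_neg h'] at hab
      have : 2 * n - v a = 2 * n - v b := congrArg Fin.val hab
      exact hmono.injective (by omega)
  · intro j hj
    have hjmu := (Finset.mem_filter.mp hj).2
    have hjn : j.val < n := j.isLt
    rw [hmu0] at hjmu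
    cases h1 : (statusOf n v j).1 <;> cases h2 : (statusOf n v j).2 <;>
        rw [h1, h2] at hjmu <;> try simp at hjmu
    · -- (false, true) : barred single
      obtain ⟨k, hk⟩ := (hs2 j).mp h2
      have hkn : ¬ (v k ≤ n) := by omega
      have hsingle : IsSingle n v k := by
        intro ⟨l, hl⟩
        have : v l = j.val + 1 := by omega
        have : (statusOf n v j).1 = true := (hs1 j).mpr ⟨l, this⟩
        rw [h1] at this; cases this
      refine ⟨k, Finset.mem_filter.mpr ⟨mem_univ _, hsingle⟩, ?_⟩
      beta_reduce
      rw [dif_neg hkn]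
      exact Fin.ext (by dsimp; omega)
    · -- (true, false) : unbarred single
      obtain ⟨k, hk⟩ := (hs1 j).mp h1
      have hkn : v k ≤ n := by omega
      have hsingle : IsSingle n v k := by
        intro ⟨l, hl⟩
        have : v l = 2 * n - j.val := by omega
        have : (statusOf n v j).2 = true := (hs2 j).mpr ⟨l, this⟩
        rw [h2] at this; cases this
      refine ⟨k, Finset.mem_filter.mpr ⟨mem_univ _, hsingle⟩, ?_⟩
      beta_reduce
      rw [dif_pos hkn]
      exact Fin.ext (by dsimp; omega)

/-- If some element of `B(Λ_n)` of weight `μ` has exactly `m < n` single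
entries, then `n − m = 2k` is even and the number of elements of `B(Λ_n)` of
weight `μ` is the `k`-th Catalan number `(1/(k+1))·C(2k, k)`. -/
theorem weight_multiplicity_catalan (n m : ℕ) (hn : 1 ≤ n) (hm : m < n)
    (μ : Fin n → ℤ) (v : Fin n → ℕ) (hv : v ∈ BLn n) (hwtv : wt n v = μ)
    (hsingles : {k : Fin n | IsSingle n v k}.ncard = m) :
    ∃ k : ℕ, n - m = 2 * k ∧
      {w : Fin n → ℕ | w ∈ BLn n ∧ wt n w = μ}.ncard = catalan k ∧
      (k + 1) * catalan k = (2 * k).choose k := by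
  classical
  have hf : Pf n μ (statusOf n v) := Pf_of_mem hn v hv hwtv
  have hd := hf.1
  have hμ : ∀ j, μ j = -1 ∨ μ j = 0 ∨ μ j = 1 := murange_of_diff hd
  have hsetfin : {k : Fin n | IsSingle n v k} = ↑(univ.filter fun k => IsSingle n v k) := by
    ext k; simp
  have hm' : (univ.filter fun k => IsSingle n v k).card = m := by
    rw [← hsingles, hsetfin, Set.ncard_coe_finset]
  have hio := singles_card hn v hv hd
  have hmS : (univ.filter fun j : Fin n => ¬ (μ j = 0)).card = m := by omega
  set K := (univ.filter fun x : Fin n => μ x = 0 ∧ (statusOf n v x).1 = true).card with hKdef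
  have hK : n = (univ.filter fun x : Fin n => ¬ (μ x = 0)).card + 2 * K := by
    have h2 := hf.2.1
    rw [sum_cnt_split hd univ] at h2
    omega
  have hpart := Finset.card_filter_add_card_filter_not
      (s := (univ : Finset (Fin n))) (p := fun j : Fin n => μ j = 0)
  rw [card_univ, Fintype.card_fin] at hpart
  have hZcard : (Zset n μ).card = 2 * K := by
    have hzz : (Zset n μ).card = (univ.filter fun j : Fin n => μ j = 0).card := rfl
    omega
  refine ⟨K, by omega, ?_, ?_⟩
  · have e : {w : Fin n → ℕ // w ∈ BLn n ∧ wt n w = μ} ≃ {p : DyckWord // p.semilength = K} :=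
      ((equivAB hn μ).trans (equivBC hμ K hK)).trans (equivCD hZcard)
    have e' : ↥{w : Fin n → ℕ | w ∈ BLn n ∧ wt n w = μ}
        ≃ {w : Fin n → ℕ // w ∈ BLn n ∧ wt n w = μ} :=
      Equiv.subtypeEquivRight (fun w => Iff.rfl)
    rw [← Nat.card_coe_set_eq, Nat.card_congr (e'.trans e), Nat.card_eq_fintype_card,
      DyckWord.card_dyckWord_semilength_eq_catalan]
  · rw [succ_mul_catalan_eq_centralBinom]
    rfl

end Stmt1
end

section
/- For every λ = (λ_0, …, λ_n) ∈ ℤ^{n+1}, applying to λ the word s_n (s_{n−1} s_n) (s_{n−2} s_{n−1} s_n) ⋯ (s_1 s_2 ⋯ s_n) — i.e., the composite of the maps in this word where the rightmost letter acts first — and then applying σ, yields λ + (λ_0 + λ_1 + ⋯ + λ_n)·(Λ_n − Λ_0). Hence the element σ s_n s_{n−1} s_n s_{n−2} s_{n−1} s_n ⋯ s_1 ⋯ s_n of the extended affine Weyl group of C_n^{(1)} is the translation t(ϖ_n) associated with the level-zero weight ϖ_n = Λ_n − Λ_0. -/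
namespace Stmt2

def lamAt {n : ℕ} (lam : Fin (n + 1) → ℤ) (i : ℕ) : ℤ :=
  if h : i < n + 1 then lam ⟨i, h⟩ else 0

/-- The simple reflection `s_i` of the affine Weyl group of `C_n^{(1)}` acting
on the classical weight lattice written in fundamental-weight coordinates:
`s_0` replaces `(λ_0, λ_1)` by `(−λ_0, λ_1 + 2λ_0)`; for `1 ≤ i ≤ n−1`,
`s_i` replaces `(λ_{i−1}, λ_i, λ_{i+1})` by `(λ_{i−1}+λ_i, −λ_i, λ_{i+1}+λ_i)`;
`s_n` replaces `(λ_{n−1}, λ_n)` by `(λ_{n−1}+2λ_n, −λ_n)`. -/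
def s {n : ℕ} (i : ℕ) (lam : Fin (n + 1) → ℤ) : Fin (n + 1) → ℤ := fun j =>
  if j.val = i then -(lamAt lam i)
  else if j.val = i + 1 then lam j + (if i = 0 then 2 * lamAt lam i else lamAt lam i)
  else if j.val + 1 = i then lam j + (if i = n then 2 * lamAt lam i else lamAt lam i)
  else lam j

/-- The Dynkin diagram automorphism `σ : i ↔ n − i`. -/
def σ {n : ℕ} (lam : Fin (n + 1) → ℤ) : Fin (n + 1) → ℤ := fun j => lam j.rev

/-- The word `s_n (s_{n−1} s_n) (s_{n−2} s_{n−1} s_n) ⋯ (s_1 s_2 ⋯ s_n)`. -/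
def word (n : ℕ) : List ℕ :=
  ((List.range n).map fun r => (List.range (r + 1)).map fun j => n - r + j).flatten

/-! ### Auxiliary machinery: the action on the `ε`-coordinates `x_t = ∑_{i ≥ t} λ_i`. -/

/-- The action of `s_i` (for `1 ≤ i ≤ n`) on the partial-sum coordinates:
`s_n` negates `x_n`, and `s_i` for `i < n` swaps `x_i` and `x_{i+1}`. -/
def a (n i : ℕ) (y : ℕ → ℤ) : ℕ → ℤ := fun t =>
  if i = n then (if t = n then -y n else y t)
  else if t = i then y (i + 1) else if t = i + 1 then y i else y t

lemma a_top (n : ℕ) (y : ℕ → ℤ) (t : ℕ) : a n n y t = if t = n then -y n else y t := by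
  unfold a; rw [if_pos rfl]

lemma a_at (n i : ℕ) (y : ℕ → ℤ) (h : i ≠ n) : a n i y i = y (i + 1) := by
  unfold a; rw [if_neg h, if_pos rfl]

lemma a_at1 (n i : ℕ) (y : ℕ → ℤ) (h : i ≠ n) : a n i y (i + 1) = y i := by
  unfold a; rw [if_neg h, if_neg (by omega), if_pos rfl]

lemma a_other (n i : ℕ) (y : ℕ → ℤ) {t : ℕ} (h : i ≠ n) (h1 : t ≠ i) (h2 : t ≠ i + 1) :
    a n i y t = y t := by
  unfold a; rw [if_neg h, if_neg h1, if_neg h2]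

/-- The partial sums `T lam t = λ_t + λ_{t+1} + ⋯ + λ_n`. -/
def T {n : ℕ} (lam : Fin (n + 1) → ℤ) : ℕ → ℤ := fun t => ∑ i ∈ Finset.Icc t n, lamAt lam i

lemma lamAt_ge {n : ℕ} (lam : Fin (n + 1) → ℤ) {t : ℕ} (h : n + 1 ≤ t) : lamAt lam t = 0 := by
  unfold lamAt; rw [dif_neg (by omega)]

lemma T_ge {n : ℕ} (lam : Fin (n + 1) → ℤ) {t : ℕ} (h : n + 1 ≤ t) : T lam t = 0 := by
  unfold T; rw [Finset.Icc_eq_empty (by omega)]; simp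

lemma T_rec {n : ℕ} (lam : Fin (n + 1) → ℤ) (t : ℕ) : T lam t = lamAt lam t + T lam (t + 1) := by
  by_cases h : t ≤ n
  · unfold T
    have hins : Finset.Icc t n = insert t (Finset.Icc (t + 1) n) := by
      rw [Finset.Icc_add_one_left_eq_Ioc, Finset.Ioc_insert_left h]
    rw [hins, Finset.sum_insert (by simp)]
  · rw [T_ge lam (by omega), T_ge lam (by omega), lamAt_ge lam (by omega)]; ring

lemma T_zero {n : ℕ} (lam : Fin (n + 1) → ℤ) : T lam 0 = ∑ i, lam i := by
  unfold T
  rw [show Finset.Icc 0 n = Finset.range (n + 1) from by ext x; simp [Nat.lt_succ_iff]]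
  rw [← Fin.sum_univ_eq_sum_range (fun i => lamAt lam i) (n + 1)]
  apply Finset.sum_congr rfl
  intro i _
  unfold lamAt
  rw [dif_pos i.isLt]

lemma lamAt_s_eq {n : ℕ} (lam : Fin (n + 1) → ℤ) {i t : ℕ} (hi1 : 1 ≤ i)
    (ht : t ≤ n) :
    lamAt (s i lam) t =
      if t = i then -(lamAt lam i)
      else if t = i + 1 then lamAt lam t + lamAt lam i
      else if t + 1 = i then lamAt lam t + (if i = n then 2 * lamAt lam i else lamAt lam i)
      else lamAt lam t := by
  have ht' : t < n + 1 := by omega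
  have hv : lamAt lam t = lam ⟨t, ht'⟩ := by unfold lamAt; rw [dif_pos ht']
  have h0 : lamAt (s i lam) t = s i lam ⟨t, ht'⟩ := by
    unfold lamAt; rw [dif_pos ht']
  rw [h0]
  show (if t = i then -(lamAt lam i)
      else if t = i + 1 then lam ⟨t, ht'⟩ + (if i = 0 then 2 * lamAt lam i else lamAt lam i)
      else if t + 1 = i then lam ⟨t, ht'⟩ + (if i = n then 2 * lamAt lam i else lamAt lam i)
      else lam ⟨t, ht'⟩) = _
  rw [if_neg (by omega : ¬ i = 0), ← hv]

/-- Key intertwining: for `1 ≤ i ≤ n`, `T ∘ s_i = a_i ∘ T`. -/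
lemma T_s {n : ℕ} (lam : Fin (n + 1) → ℤ) {i : ℕ} (h1 : 1 ≤ i) (h2 : i ≤ n) :
    T (s i lam) = a n i (T lam) := by
  have main : ∀ d t, n + 1 ≤ t + d → T (s i lam) t = a n i (T lam) t := by
    intro d
    induction d with
    | zero =>
      intro t ht
      rw [T_ge _ (by omega)]
      by_cases hin : i = n
      · subst hin
        rw [a_top, if_neg (by omega), T_ge _ (by omega)]
      · rw [a_other n i _ hin (by omega) (by omega), T_ge _ (by omega)]
    | succ d ih =>
      intro t ht
      by_cases hd : n + 1 ≤ t + d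
      · exact ih t hd
      · have htn : t ≤ n := by omega
        have ih1 := ih (t + 1) (by omega)
        rw [T_rec (s i lam) t, ih1, lamAt_s_eq lam h1 htn]
        by_cases hin : i = n
        · subst hin
          by_cases hti : t = i
          · subst hti
            rw [if_pos rfl, a_top, a_top, if_neg (by omega), if_pos rfl,
              T_ge lam (by omega : t + 1 ≤ t + 1), T_rec lam t,
              T_ge lam (by omega : t + 1 ≤ t + 1)]
            ring
          · rw [if_neg hti, if_neg (by omega), a_top, a_top, if_neg hti]
            by_cases ht1 : t + 1 = i
            · rw [if_pos ht1, if_pos ht1, if_pos rfl]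
              have h3 := T_rec lam t
              rw [ht1] at h3
              have h4 := T_rec lam i
              rw [T_ge lam (by omega : i + 1 ≤ i + 1)] at h4
              rw [h3, h4]; ring
            · rw [if_neg ht1, if_neg ht1, T_rec lam t]
        · by_cases hti : t = i
          · subst hti
            rw [if_pos rfl, a_at1 n t _ hin, a_at n t _ hin, T_rec lam t]
            ring
          · rw [if_neg hti]
            by_cases hti1 : t = i + 1
            · subst hti1
              rw [if_pos rfl, a_other n i _ hin (by omega) (by omega),
                a_at1 n i _ hin]
              have h3 := T_rec lam i
              have h4 := T_rec lam (i + 1)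
              rw [h3, h4]
              have e : i + 1 + 1 = i + 2 := rfl
              rw [e]; ring
            · rw [if_neg hti1]
              by_cases ht1 : t + 1 = i
              · rw [if_pos ht1, if_neg hin]
                rw [show a n i (T lam) (t + 1) = T lam (i + 1) from by
                  rw [ht1, a_at n i _ hin]]
                rw [a_other n i _ hin hti hti1]
                have h3 := T_rec lam t
                rw [ht1] at h3
                have h4 := T_rec lam i
                rw [h3, h4]; ring
              · rw [if_neg ht1, a_other n i _ hin (by omega) (by omega),
                  a_other n i _ hin hti hti1, T_rec lam t]
  funext t
  exact main (n + 1) t (by omega)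

/-- The effect of the block `s_{n-r} s_{n-r+1} ⋯ s_n` on the partial-sum coordinates. -/
def B (n j : ℕ) (y : ℕ → ℤ) : ℕ → ℤ := fun t =>
  if t < j then y t else if t = j then -(y n) else if t ≤ n then y (t - 1) else y t

/-- The effect of the suffix `s_n ⋯ (s_j ⋯ s_n)` of the word. -/
def V (n j : ℕ) (y : ℕ → ℤ) : ℕ → ℤ := fun t =>
  if t < j then y t else if t ≤ n then -(y (n + j - t)) else y t

set_option linter.unreachableTactic false in
set_option linter.unusedTactic false in
lemma block_fold (n : ℕ) (y : ℕ → ℤ) : ∀ r, r < n →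
    List.foldr (a n) y ((List.range (r + 1)).map fun j => n - r + j) = B n (n - r) y := by
  intro r
  induction r with
  | zero =>
    intro _
    have hl : (List.range (0 + 1)).map (fun j => n - 0 + j) = [n] := by
      simp [List.range_succ]
    rw [hl, List.foldr_cons, List.foldr_nil]
    funext t
    rw [a_top]
    unfold B
    split_ifs <;> first | rfl | omega
  | succ r ihr =>
    intro hr
    have hmap : (List.range (r + 1 + 1)).map (fun j => n - (r + 1) + j)
        = (n - (r + 1)) :: (List.range (r + 1)).map fun j => n - r + j := by
      rw [List.range_succ_eq_map, List.map_cons, List.map_map]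
      congr 1
      apply List.map_congr_left
      intro x _
      simp only [Function.comp_apply]
      omega
    rw [hmap, List.foldr_cons, ihr (by omega)]
    funext t
    have hne : n - (r + 1) ≠ n := by omega
    by_cases h1 : t = n - (r + 1)
    · subst h1
      rw [a_at n _ _ hne, show n - (r + 1) + 1 = n - r from by omega]
      unfold B
      split_ifs <;> first | rfl | omega
    · by_cases h2 : t = n - (r + 1) + 1
      · subst h2
        rw [a_at1 n _ _ hne]
        unfold B
        split_ifs <;> first | rfl | omega | (congr 1; omega)
      · rw [a_other n _ _ hne h1 h2]
        unfold B
        split_ifs <;> first | rfl | omega | (congr 1; omega)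

set_option linter.unreachableTactic false in
set_option linter.unusedTactic false in
lemma word_fold (n : ℕ) : ∀ m ≤ n, ∀ y : ℕ → ℤ,
    List.foldr (a n) y
      (((List.range m).map fun r => (List.range (r + 1)).map fun j => n - r + j).flatten)
      = V n (n + 1 - m) y := by
  intro m
  induction m with
  | zero =>
    intro _ y
    simp only [List.range_zero, List.map_nil, List.flatten_nil, List.foldr_nil]
    funext t
    unfold V
    split_ifs <;> first | rfl | omega
  | succ m ih =>
    intro hm y
    rw [List.range_succ, List.map_append, List.flatten_append, List.foldr_append]
    simp only [List.map_cons, List.map_nil, List.flatten_cons, List.flatten_nil, List.append_nil]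
    rw [block_fold n y m (by omega), ih (by omega)]
    funext t
    unfold V B
    split_ifs <;> first | rfl | omega | (congr 1; omega) |
      (simp only [neg_inj]; congr 1; omega)

lemma word_mem (n : ℕ) {i : ℕ} (h : i ∈ word n) : 1 ≤ i ∧ i ≤ n := by
  unfold word at h
  simp only [List.mem_flatten, List.mem_map] at h
  obtain ⟨l, ⟨r, hr, rfl⟩, hil⟩ := h
  simp only [List.mem_map, List.mem_range] at hil hr
  obtain ⟨j, hj, rfl⟩ := hil
  omega

lemma fold_T {n : ℕ} (lam : Fin (n + 1) → ℤ) (L : List ℕ)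
    (hL : ∀ i ∈ L, 1 ≤ i ∧ i ≤ n) :
    T (L.foldr s lam) = L.foldr (a n) (T lam) := by
  induction L with
  | nil => rfl
  | cons i L ih =>
    simp only [List.foldr_cons]
    rw [T_s _ (hL i (by simp)).1 (hL i (by simp)).2,
      ih (fun j hj => hL j (by simp [hj]))]

/-- Applying the word `s_n (s_{n−1} s_n) ⋯ (s_1 ⋯ s_n)` (rightmost letter acts
first) and then `σ` yields `λ + (λ_0 + ⋯ + λ_n)(Λ_n − Λ_0)`; i.e. this element
of the extended affine Weyl group of `C_n^{(1)}` is the translation `t(ϖ_n)`,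
`ϖ_n = Λ_n − Λ_0`. -/
theorem translation_varpi (n : ℕ) (hn : 2 ≤ n) (lam : Fin (n + 1) → ℤ) :
    σ ((word n).foldr s lam) =
      lam + (∑ i, lam i) •
        ((Pi.single (Fin.last n) 1 : Fin (n + 1) → ℤ) - Pi.single 0 1) := by
  set F := (word n).foldr s lam with hF
  have hTF : T F = V n 1 (T lam) := by
    rw [hF, fold_T lam (word n) (fun i h => word_mem n h)]
    have h := word_fold n n le_rfl (T lam)
    rw [show n + 1 - n = 1 from by omega] at h
    unfold word
    exact h
  have hrec : ∀ t, lamAt F t = T F t - T F (t + 1) := by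
    intro t
    have := T_rec F t
    linarith
  have hk : T lam 0 = ∑ i, lam i := T_zero lam
  funext j
  have hjlt : (j : ℕ) < n + 1 := j.isLt
  have hrev : (j.rev : ℕ) = n - (j : ℕ) := by
    rw [Fin.val_rev]
    omega
  have hσ : σ F j = lamAt F (n - (j : ℕ)) := by
    show F j.rev = _
    unfold lamAt
    rw [dif_pos (by omega)]
    congr 1
    apply Fin.ext
    simp [hrev]
  rw [hσ, hrec, hTF]
  simp only [Pi.add_apply, Pi.smul_apply, Pi.sub_apply, Pi.single_apply, smul_eq_mul]
  by_cases hj0 : (j : ℕ) = 0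
  · have hje : j = 0 := Fin.ext (by simpa using hj0)
    have hjne : j ≠ Fin.last n := by
      rw [hje]
      intro h
      have := congrArg Fin.val h
      simp [Fin.last] at this
      omega
    rw [hj0, Nat.sub_zero, if_neg hjne, if_pos hje]
    have hVn : V n 1 (T lam) n = -(T lam 1) := by
      unfold V
      rw [if_neg (by omega), if_pos (le_refl n), show n + 1 - n = 1 from by omega]
    have hVn1 : V n 1 (T lam) (n + 1) = 0 := by
      unfold V
      rw [if_neg (by omega), if_neg (by omega)]
      exact T_ge lam (by omega)
    rw [hVn, hVn1]
    have h0 := T_rec lam 0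
    have hl0 : lamAt lam 0 = lam j := by
      unfold lamAt
      rw [dif_pos (by omega)]
      congr 1
      exact (Fin.ext (by simp [hje])).symm
    rw [hk] at h0
    rw [hl0] at h0
    linarith
  · by_cases hjn : (j : ℕ) = n
    · have hje : j = Fin.last n := Fin.ext (by simpa [Fin.last] using hjn)
      have hjne : j ≠ 0 := by
        intro h
        rw [h] at hjn
        simp at hjn
        omega
      rw [hjn, Nat.sub_self, if_pos hje, if_neg hjne]
      have hV0 : V n 1 (T lam) 0 = T lam 0 := by
        unfold V
        rw [if_pos (by omega)]
      have hV1 : V n 1 (T lam) 1 = -(T lam n) := by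
        unfold V
        rw [if_neg (by omega), if_pos (by omega), show n + 1 - 1 = n from by omega]
      rw [hV0, hV1, hk]
      have hTn := T_rec lam n
      rw [T_ge lam (by omega : n + 1 ≤ n + 1)] at hTn
      have hln : lamAt lam n = lam j := by
        unfold lamAt
        rw [dif_pos (by omega)]
        congr 1
        exact (Fin.ext (by simp [hje, Fin.last])).symm
      rw [hln] at hTn
      linarith
    · have hjne1 : j ≠ Fin.last n := by
        intro h
        exact hjn (by simp [h, Fin.last])
      have hjne0 : j ≠ 0 := by
        intro h
        exact hj0 (by simp [h])
      rw [if_neg hjne1, if_neg hjne0]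
      set t := n - (j : ℕ) with hts
      have ht1 : 1 ≤ t := by omega
      have ht2 : t ≤ n - 1 := by omega
      have hVt : V n 1 (T lam) t = -(T lam ((j : ℕ) + 1)) := by
        unfold V
        rw [if_neg (by omega), if_pos (by omega), show n + 1 - t = (j : ℕ) + 1 from by omega]
      have hVt1 : V n 1 (T lam) (t + 1) = -(T lam (j : ℕ)) := by
        unfold V
        rw [if_neg (by omega), if_pos (by omega), show n + 1 - (t + 1) = (j : ℕ) from by omega]
      rw [hVt, hVt1]
      have hTj := T_rec lam (j : ℕ)
      have hlj : lamAt lam (j : ℕ) = lam j := by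
        unfold lamAt
        rw [dif_pos (by omega)]
      rw [hlj] at hTj
      linarith

end Stmt2
end

section
/- The data (e_0, e_1, e_2, γ_0, γ_1, γ_2, ε_0, ε_1, ε_2) form a positive geometric crystal for C_2^{(1)}: for all x ∈ ℝ_{>0}^3 and all c, c1, c2 ∈ ℝ_{>0}: (i) e_i^1(x) = x and e_i^{c1·c2}(x) = e_i^{c1}(e_i^{c2}(x)) for i = 0, 1, 2; (ii) γ_j(e_i^c(x)) = c^{a_ij}·γ_j(x) for all i, j ∈ {0, 1, 2}; (iii) ε_i(e_i^c(x)) = c^{−1}·ε_i(x) for i = 0, 1, 2, and ε_0(e_2^c(x)) = ε_0(x) and ε_2(e_0^c(x)) = ε_2(x); (iv) e_0^{c1}(e_2^{c2}(x)) = e_2^{c2}(e_0^{c1}(x)), and for (i, j) ∈ {(1, 0), (1, 2)} (the pairs with a_ij = −2, a_ji = −1): e_i^{c1}(e_j^{c1²·c2}(e_i^{c1·c2}(e_j^{c2}(x)))) = e_j^{c2}(e_i^{c1·c2}(e_j^{c1²·c2}(e_i^{c1}(x)))). -/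
namespace Stmt4

noncomputable section

/-- Points of the geometric crystal, with coordinates `x = (x22, x11, x21)`. -/
abbrev X := ℝ × ℝ × ℝ

def PosX (x : X) : Prop := 0 < x.1 ∧ 0 < x.2.1 ∧ 0 < x.2.2

/-- `c2 = (c·x21·x22 + x11²)/(x21·x22 + x11²)`. -/
def cc2 (c : ℝ) (x : X) : ℝ :=
  (c * x.2.2 * x.1 + x.2.1 ^ 2) / (x.2.2 * x.1 + x.2.1 ^ 2)

def e0 (c : ℝ) (x : X) : X := ((cc2 c x / c) * x.1, x.2.1 / c, x.2.2 / cc2 c x)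
def e1 (c : ℝ) (x : X) : X := (x.1, c * x.2.1, x.2.2)
def e2 (c : ℝ) (x : X) : X := (cc2 c x * x.1, x.2.1, (c / cc2 c x) * x.2.2)

def e : Fin 3 → ℝ → X → X := ![e0, e1, e2]

def γ : Fin 3 → X → ℝ :=
  ![fun x => 1 / x.2.1 ^ 2,
    fun x => x.2.1 ^ 2 / (x.2.2 * x.1),
    fun x => x.2.2 ^ 2 * x.1 ^ 2 / x.2.1 ^ 2]

def ε : Fin 3 → X → ℝ :=
  ![fun x => x.2.2 + x.2.1 ^ 2 / x.1,
    fun x => x.1 / x.2.1,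
    fun x => (x.2.2 * x.1 + x.2.1 ^ 2) / (x.1 ^ 2 * x.2.2)]

/-- The Cartan matrix of `C_2^{(1)}`. -/
def A : Fin 3 → Fin 3 → ℤ := ![![2, -1, 0], ![-2, 2, -2], ![0, -1, 2]]

set_option maxHeartbeats 1600000 in
/-- `(e_0, e_1, e_2, γ_0, γ_1, γ_2, ε_0, ε_1, ε_2)` is a positive geometric
crystal for `C_2^{(1)}`. -/
theorem geometric_crystal_C2 :
    ∀ x : X, PosX x → ∀ c c1 c2 : ℝ, 0 < c → 0 < c1 → 0 < c2 →
      ((∀ i : Fin 3, e i 1 x = x ∧ e i (c1 * c2) x = e i c1 (e i c2 x)) ∧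
       (∀ i j : Fin 3, γ j (e i c x) = c ^ (A i j) * γ j x) ∧
       ((∀ i : Fin 3, ε i (e i c x) = c⁻¹ * ε i x) ∧
         ε 0 (e 2 c x) = ε 0 x ∧ ε 2 (e 0 c x) = ε 2 x) ∧
       (e 0 c1 (e 2 c2 x) = e 2 c2 (e 0 c1 x) ∧
        (∀ p : Fin 3 × Fin 3, p = (1, 0) ∨ p = (1, 2) →
          e p.1 c1 (e p.2 (c1 ^ 2 * c2) (e p.1 (c1 * c2) (e p.2 c2 x))) =
            e p.2 c2 (e p.1 (c1 * c2) (e p.2 (c1 ^ 2 * c2) (e p.1 c1 x)))))) := by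
  rintro ⟨a, b, d⟩ ⟨ha, hb, hd⟩ c c1 c2 hc h1 h2
  simp only at ha hb hd
  have hc' : c ≠ 0 := hc.ne'
  have h1' : c1 ≠ 0 := h1.ne'
  have h2' : c2 ≠ 0 := h2.ne'
  have ha' : a ≠ 0 := ha.ne'
  have hb' : b ≠ 0 := hb.ne'
  have hd' : d ≠ 0 := hd.ne'
  have hD : d * a + b ^ 2 ≠ 0 := by positivity
  refine ⟨?_, ?_, ⟨?_, ?_, ?_⟩, ?_, ?_⟩
  · intro i
    fin_cases i <;> constructor <;>
      (simp only [Fin.zero_eta, Fin.mk_one, Fin.reduceFinMk, e, e0, e1, e2, cc2,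
          Matrix.cons_val_zero, Matrix.cons_val_one, Matrix.head_cons, Matrix.cons_val_two,
          Matrix.tail_cons, one_mul, mul_one, Prod.mk.injEq] <;>
        and_intros <;> (try field_simp) <;> (try ring) <;> (try simp))
  · intro i j
    fin_cases i <;> fin_cases j <;>
      (simp only [Fin.zero_eta, Fin.mk_one, Fin.reduceFinMk, e, e0, e1, e2, γ, A, cc2,
          Matrix.cons_val_zero, Matrix.cons_val_one, Matrix.head_cons, Matrix.cons_val_two,
          Matrix.tail_cons, zpow_neg, zpow_two, zpow_one, zpow_zero, zpow_ofNat] <;>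
        (try field_simp) <;> (try ring) <;> (try simp))
  · intro i
    fin_cases i <;>
      (simp only [Fin.zero_eta, Fin.mk_one, Fin.reduceFinMk, e, e0, e1, e2, ε, cc2,
          Matrix.cons_val_zero, Matrix.cons_val_one, Matrix.head_cons, Matrix.cons_val_two,
          Matrix.tail_cons] <;>
        (try field_simp) <;> (try ring) <;> (try simp))
  · simp only [e, e0, e1, e2, ε, cc2, Matrix.cons_val_zero, Matrix.cons_val_one,
      Matrix.head_cons, Matrix.cons_val_two, Matrix.tail_cons]
    field_simp
  · simp only [e, e0, e1, e2, ε, cc2, Matrix.cons_val_zero, Matrix.cons_val_one,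
      Matrix.head_cons, Matrix.cons_val_two, Matrix.tail_cons]
    field_simp
  · simp only [e, e0, e1, e2, cc2, Matrix.cons_val_zero, Matrix.cons_val_one,
      Matrix.head_cons, Matrix.cons_val_two, Matrix.tail_cons, Prod.mk.injEq]
    and_intros <;> (try field_simp) <;> (try ring) <;> (try simp)
  · rintro p (rfl | rfl) <;>
      (simp only [e, e0, e1, e2, cc2, Matrix.cons_val_zero, Matrix.cons_val_one,
          Matrix.head_cons, Matrix.cons_val_two, Matrix.tail_cons, Prod.mk.injEq] <;>
        and_intros <;> (try field_simp) <;> (try ring) <;> (try simp))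


end

end Stmt4
end

section
/- For all x = (x22, x11, x21) ∈ ℝ_{>0}^3, all y ∈ ℝ_{>0}^3 and all c ∈ ℝ_{>0}: (i) τ(σ̄(x)) = x and σ̄(τ(y)) = y, so σ̄ is a bijection of ℝ_{>0}^3 with inverse τ; (ii) τ(ē_0^c(σ̄(x))) = ((c2/c)·x22, x11/c, x21/c2), where c2 = (c·x21·x22 + x11²)/(x21·x22 + x11²); (iii) ε̄_0(σ̄(x)) = x21 + x11²/x22; (iv) γ̄_0(σ̄(x)) = 1/x11². (This computes the 0-action, ε_0 and γ_0 of the C_2^{(1)}-geometric crystal by conjugating through σ̄.) -/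
namespace Stmt5

noncomputable section

/-- `x = (x22, x11, x21)` on the source, `y = (y02, y11, y01)` on the target. -/
abbrev X := ℝ × ℝ × ℝ

def PosX (x : X) : Prop := 0 < x.1 ∧ 0 < x.2.1 ∧ 0 < x.2.2

/-- `σ̄(x22, x11, x21) = (1/x21, x11/(x21·x22), 1/x22)`. -/
def sigmaBar (x : X) : X := (1 / x.2.2, x.2.1 / (x.2.2 * x.1), 1 / x.1)

/-- `τ(y02, y11, y01) = (1/y01, y11/(y01·y02), 1/y02)`. -/
def tau (y : X) : X := (1 / y.2.2, y.2.1 / (y.2.2 * y.1), 1 / y.1)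

/-- `c̄0 = (c·y01·y02 + y11²)/(y01·y02 + y11²)`. -/
def cbar0 (c : ℝ) (y : X) : ℝ :=
  (c * y.2.2 * y.1 + y.2.1 ^ 2) / (y.2.2 * y.1 + y.2.1 ^ 2)

/-- `ē_0^c(y) = (c̄0·y02, y11, (c/c̄0)·y01)`. -/
def ebar0 (c : ℝ) (y : X) : X := (cbar0 c y * y.1, y.2.1, (c / cbar0 c y) * y.2.2)

/-- `ε̄_0(y) = (y01·y02 + y11²)/(y02²·y01)`. -/
def epsbar0 (y : X) : ℝ := (y.2.2 * y.1 + y.2.1 ^ 2) / (y.1 ^ 2 * y.2.2)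

/-- `γ̄_0(y) = y01²·y02²/y11²`. -/
def gammabar0 (y : X) : ℝ := y.2.2 ^ 2 * y.1 ^ 2 / y.2.1 ^ 2

/-- `c2 = (c·x21·x22 + x11²)/(x21·x22 + x11²)`. -/
def cc2 (c : ℝ) (x : X) : ℝ :=
  (c * x.2.2 * x.1 + x.2.1 ^ 2) / (x.2.2 * x.1 + x.2.1 ^ 2)

theorem sigma_conjugation (x y : X) (hx : PosX x) (hy : PosX y)
    (c : ℝ) (hc : 0 < c) :
    tau (sigmaBar x) = x ∧ sigmaBar (tau y) = y ∧
    tau (ebar0 c (sigmaBar x)) =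
      ((cc2 c x / c) * x.1, x.2.1 / c, x.2.2 / cc2 c x) ∧
    epsbar0 (sigmaBar x) = x.2.2 + x.2.1 ^ 2 / x.1 ∧
    gammabar0 (sigmaBar x) = 1 / x.2.1 ^ 2 := by
  obtain ⟨x1, x2, x3⟩ := x
  obtain ⟨y1, y2, y3⟩ := y
  obtain ⟨hx1, hx2, hx3⟩ := hx
  obtain ⟨hy1, hy2, hy3⟩ := hy
  simp only [PosX] at *
  have hden : x3 * x1 + x2 ^ 2 > 0 := by positivity
  have hnum : c * x3 * x1 + x2 ^ 2 > 0 := by positivity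
  have hcc : cc2 c (x1, x2, x3) > 0 := div_pos hnum hden
  have hcb : cbar0 c (sigmaBar (x1, x2, x3)) = cc2 c (x1, x2, x3) := by
    simp only [cbar0, sigmaBar, cc2]
    rw [div_eq_div_iff (by positivity) (by positivity)]
    field_simp
  refine ⟨?_, ?_, ?_, ?_, ?_⟩
  · simp only [tau, sigmaBar, Prod.mk.injEq]
    refine ⟨?_, ?_, ?_⟩ <;> field_simp <;> (try ring) <;> exact Or.inl trivial
  · simp only [tau, sigmaBar, Prod.mk.injEq]
    refine ⟨?_, ?_, ?_⟩ <;> field_simp <;> (try ring) <;> exact Or.inl trivial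
  · simp only [tau, ebar0, Prod.mk.injEq]
    rw [hcb]
    simp only [sigmaBar]
    have h1 : cc2 c (x1, x2, x3) ≠ 0 := ne_of_gt hcc
    refine ⟨?_, ?_, ?_⟩ <;> field_simp <;> ring
  · simp only [epsbar0, sigmaBar]
    field_simp
  · simp only [gammabar0, sigmaBar]
    field_simp


end

end Stmt5
end

section
/- For all x = (x22, x11, x21) ∈ ℝ_{>0}^3 and all c, d ∈ ℝ_{>0}, the Verma relation e_1^c(e_0^{c²·d}(e_1^{c·d}(e_0^d(x)))) = e_0^d(e_1^{c·d}(e_0^{c²·d}(e_1^c(x)))) holds, and both sides equal ( x22·(d·x21·x22 + x11²)/(d·(x21·x22 + c²·d·x11²)), x11/d, x21·(x21·x22 + c²·d·x11²)/(c²·d·(d·x21·x22 + x11²)) ). -/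
namespace Stmt6

noncomputable section

/-- Points of the geometric crystal, with coordinates `x = (x22, x11, x21)`. -/
abbrev X := ℝ × ℝ × ℝ

def PosX (x : X) : Prop := 0 < x.1 ∧ 0 < x.2.1 ∧ 0 < x.2.2

/-- `c2 = (c·x21·x22 + x11²)/(x21·x22 + x11²)`. -/
def cc2 (c : ℝ) (x : X) : ℝ :=
  (c * x.2.2 * x.1 + x.2.1 ^ 2) / (x.2.2 * x.1 + x.2.1 ^ 2)

def e1 (c : ℝ) (x : X) : X := (x.1, c * x.2.1, x.2.2)
def e0 (c : ℝ) (x : X) : X := ((cc2 c x / c) * x.1, x.2.1 / c, x.2.2 / cc2 c x)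

/-- The Verma relation `e_1^c e_0^{c²d} e_1^{cd} e_0^d = e_0^d e_1^{cd} e_0^{c²d} e_1^c`
for the `C_2^{(1)}`-geometric crystal, and the explicit common value. -/
theorem verma_relation (x : X) (hx : PosX x) (c d : ℝ) (hc : 0 < c) (hd : 0 < d) :
    e1 c (e0 (c ^ 2 * d) (e1 (c * d) (e0 d x))) =
      e0 d (e1 (c * d) (e0 (c ^ 2 * d) (e1 c x))) ∧
    e1 c (e0 (c ^ 2 * d) (e1 (c * d) (e0 d x))) =
      (x.1 * (d * x.2.2 * x.1 + x.2.1 ^ 2) /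
         (d * (x.2.2 * x.1 + c ^ 2 * d * x.2.1 ^ 2)),
       x.2.1 / d,
       x.2.2 * (x.2.2 * x.1 + c ^ 2 * d * x.2.1 ^ 2) /
         (c ^ 2 * d * (d * x.2.2 * x.1 + x.2.1 ^ 2))) := by
  obtain ⟨a, b, e⟩ := x
  obtain ⟨h1, h2, h3⟩ := hx
  simp only at h1 h2 h3
  have hc' : c ≠ 0 := hc.ne'
  have hd' : d ≠ 0 := hd.ne'
  have D1 : e * a + b ^ 2 ≠ 0 := by positivity
  have D2 : d * e * a + b ^ 2 ≠ 0 := by positivity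
  have D3 : e * a + c ^ 2 * d * b ^ 2 ≠ 0 := by positivity
  have D4 : e * a + c ^ 2 * b ^ 2 ≠ 0 := by positivity
  have hL1 : e0 d (a, b, e) =
      (a * (d * e * a + b ^ 2) / (d * (e * a + b ^ 2)), b / d,
       e * (e * a + b ^ 2) / (d * e * a + b ^ 2)) := by
    refine Prod.ext ?_ (Prod.ext ?_ ?_) <;> simp only [e0, e1, cc2] <;> (try field_simp) <;> (try ring)
  have hL2 : e1 (c * d) (a * (d * e * a + b ^ 2) / (d * (e * a + b ^ 2)), b / d,
       e * (e * a + b ^ 2) / (d * e * a + b ^ 2)) =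
      (a * (d * e * a + b ^ 2) / (d * (e * a + b ^ 2)), c * b,
       e * (e * a + b ^ 2) / (d * e * a + b ^ 2)) := by
    refine Prod.ext ?_ (Prod.ext ?_ ?_) <;> simp only [e0, e1, cc2] <;> (try field_simp) <;> (try ring)
  have hL3 : e0 (c ^ 2 * d) (a * (d * e * a + b ^ 2) / (d * (e * a + b ^ 2)), c * b,
       e * (e * a + b ^ 2) / (d * e * a + b ^ 2)) =
      (a * (d * e * a + b ^ 2) / (d * (e * a + c ^ 2 * d * b ^ 2)), b / (c * d),
       e * (e * a + c ^ 2 * d * b ^ 2) / (c ^ 2 * d * (d * e * a + b ^ 2))) := by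
    refine Prod.ext ?_ (Prod.ext ?_ ?_) <;> simp only [e0, e1, cc2] <;> (try field_simp) <;> (try ring)
  have hL4 : e1 c (a * (d * e * a + b ^ 2) / (d * (e * a + c ^ 2 * d * b ^ 2)), b / (c * d),
       e * (e * a + c ^ 2 * d * b ^ 2) / (c ^ 2 * d * (d * e * a + b ^ 2))) =
      (a * (d * e * a + b ^ 2) / (d * (e * a + c ^ 2 * d * b ^ 2)), b / d,
       e * (e * a + c ^ 2 * d * b ^ 2) / (c ^ 2 * d * (d * e * a + b ^ 2))) := by
    refine Prod.ext ?_ (Prod.ext ?_ ?_) <;> simp only [e0, e1, cc2] <;> (try field_simp) <;> (try ring)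
  have hR1 : e1 c (a, b, e) = (a, c * b, e) := rfl
  have hR2 : e0 (c ^ 2 * d) (a, c * b, e) =
      (a * (d * e * a + b ^ 2) / (d * (e * a + c ^ 2 * b ^ 2)), b / (c * d),
       e * (e * a + c ^ 2 * b ^ 2) / (c ^ 2 * (d * e * a + b ^ 2))) := by
    refine Prod.ext ?_ (Prod.ext ?_ ?_) <;> simp only [e0, e1, cc2] <;> (try field_simp) <;> (try ring)
  have hR3 : e1 (c * d) (a * (d * e * a + b ^ 2) / (d * (e * a + c ^ 2 * b ^ 2)), b / (c * d),
       e * (e * a + c ^ 2 * b ^ 2) / (c ^ 2 * (d * e * a + b ^ 2))) =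
      (a * (d * e * a + b ^ 2) / (d * (e * a + c ^ 2 * b ^ 2)), b,
       e * (e * a + c ^ 2 * b ^ 2) / (c ^ 2 * (d * e * a + b ^ 2))) := by
    refine Prod.ext ?_ (Prod.ext ?_ ?_) <;> simp only [e0, e1, cc2] <;> (try field_simp) <;> (try ring)
  have hR4 : e0 d (a * (d * e * a + b ^ 2) / (d * (e * a + c ^ 2 * b ^ 2)), b,
       e * (e * a + c ^ 2 * b ^ 2) / (c ^ 2 * (d * e * a + b ^ 2))) =
      (a * (d * e * a + b ^ 2) / (d * (e * a + c ^ 2 * d * b ^ 2)), b / d,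
       e * (e * a + c ^ 2 * d * b ^ 2) / (c ^ 2 * d * (d * e * a + b ^ 2))) := by
    refine Prod.ext ?_ (Prod.ext ?_ ?_) <;> simp only [e0, e1, cc2] <;> (try field_simp) <;> (try ring)
  rw [hL1, hL2, hL3, hL4, hR1, hR2, hR3, hR4]
  exact ⟨rfl, rfl⟩

end

end Stmt6
end

section
/- The maps σ̄ and τ are mutually inverse bijections of ℝ_{>0}^6: τ(σ̄(x)) = x for all x ∈ ℝ_{>0}^6 and σ̄(τ(y)) = y for all y ∈ ℝ_{>0}^6. (This is the birational bipositive isomorphism between the two parametrizations V_1(x) and V_2(y) of the C_3^{(1)}-geometric crystal.) -/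
namespace Stmt7

noncomputable section

/-- `σ̄`, where `x = (x33, x22, x32, x11, x21, x31)` (indices `0,…,5`) and the
target has coordinates `(y03, y12, y02, y21, y11, y01)`. -/
def sigmaBar (x : Fin 6 → ℝ) : Fin 6 → ℝ :=
  ![1 / x 5,
    (x 4 * x 1 + x 3 * x 2) / (x 5 * x 2 * x 1),
    1 / x 2,
    x 4 * x 1 / (x 5 * x 2 * x 0),
    x 3 * x 1 / (x 0 * (x 4 * x 1 + x 3 * x 2)),
    1 / x 0]

/-- `τ`, where `y = (y03, y12, y02, y21, y11, y01)` (indices `0,…,5`) and the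
target has coordinates `(x33, x22, x32, x11, x21, x31)`. -/
def tau (y : Fin 6 → ℝ) : Fin 6 → ℝ :=
  ![1 / y 5,
    (y 3 * y 2 + y 4 * y 1) / (y 5 * y 2 * y 1),
    1 / y 2,
    y 4 * y 1 / (y 5 * y 2 * y 0),
    y 3 * y 1 / (y 0 * (y 3 * y 2 + y 4 * y 1)),
    1 / y 0]

lemma tau0 (y : Fin 6 → ℝ) : tau y 0 = 1 / y 5 := rfl
lemma tau1 (y : Fin 6 → ℝ) : tau y 1 = (y 3 * y 2 + y 4 * y 1) / (y 5 * y 2 * y 1) := rfl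
lemma tau2 (y : Fin 6 → ℝ) : tau y 2 = 1 / y 2 := rfl
lemma tau3 (y : Fin 6 → ℝ) : tau y 3 = y 4 * y 1 / (y 5 * y 2 * y 0) := rfl
lemma tau4 (y : Fin 6 → ℝ) : tau y 4 = y 3 * y 1 / (y 0 * (y 3 * y 2 + y 4 * y 1)) := rfl
lemma tau5 (y : Fin 6 → ℝ) : tau y 5 = 1 / y 0 := rfl

lemma sigmaBar_eq_tau : sigmaBar = tau := by
  funext x i
  fin_cases i <;> simp [sigmaBar, tau] <;> ring

lemma tau_tau (x : Fin 6 → ℝ) (hx : ∀ i, 0 < x i) : tau (tau x) = x := by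
  have p0 := hx 0; have p1 := hx 1; have p2 := hx 2
  have p3 := hx 3; have p4 := hx 4; have p5 := hx 5
  have h0 := p0.ne'; have h1 := p1.ne'; have h2 := p2.ne'
  have h3 := p3.ne'; have h4 := p4.ne'; have h5 := p5.ne'
  have hs : x 3 * x 2 + x 4 * x 1 ≠ 0 := by positivity
  have e0 : tau (tau x) 0 = x 0 := by
    rw [tau0, tau5]; field_simp
  have e1 : tau (tau x) 1 = x 1 := by
    rw [tau1, tau3, tau2, tau4, tau5, tau1]; field_simp; ring
  have e2 : tau (tau x) 2 = x 2 := by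
    rw [tau2, tau2]; field_simp
  have e3 : tau (tau x) 3 = x 3 := by
    rw [tau3, tau4, tau1, tau5, tau2, tau0]; field_simp
  have e4 : tau (tau x) 4 = x 4 := by
    rw [tau4, tau3, tau2, tau0, tau1, tau4]; field_simp; ring
  have e5 : tau (tau x) 5 = x 5 := by
    rw [tau5, tau0]; field_simp
  funext i
  fin_cases i
  exacts [e0, e1, e2, e3, e4, e5]

/-- `σ̄` and `τ` are mutually inverse bijections of `ℝ_{>0}^6`. -/
theorem sigma_tau_inverse :
    (∀ x : Fin 6 → ℝ, (∀ i, 0 < x i) → tau (sigmaBar x) = x) ∧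
    (∀ y : Fin 6 → ℝ, (∀ i, 0 < y i) → sigmaBar (tau y) = y) := by
  rw [sigmaBar_eq_tau]
  exact ⟨tau_tau, tau_tau⟩

end

end Stmt7
end

section
/- For all y ∈ ℝ_{>0}^{10} and all c ∈ ℝ_{>0}: ε̄_0(ē_0^c(y)) = c^{−1}·ε̄_0(y). (This is the relation ε_0(e_0^c(x)) = c^{−1}·ε_0(x) for the C_4^{(1)}-geometric crystal, verified on the V_2(y)-side.) -/
namespace Stmt13

noncomputable section

/-! Coordinates: `y = (y04, y13, y03, y22, y12, y02, y31, y21, y11, y01)`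
at indices `0, …, 9`. -/

def c0 (y : Fin 10 → ℝ) : ℝ :=
  1 / y 0 + y 1 ^ 2 / (y 0 ^ 2 * y 2) + y 1 ^ 2 * y 4 ^ 2 / (y 0 ^ 2 * y 2 ^ 2 * y 5) +
    y 1 ^ 2 * y 4 ^ 2 * y 8 ^ 2 / (y 0 ^ 2 * y 2 ^ 2 * y 5 ^ 2 * y 9)
def c01 (c : ℝ) (y : Fin 10 → ℝ) : ℝ :=
  c / y 0 + y 1 ^ 2 / (y 0 ^ 2 * y 2) + y 1 ^ 2 * y 4 ^ 2 / (y 0 ^ 2 * y 2 ^ 2 * y 5) +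
    y 1 ^ 2 * y 4 ^ 2 * y 8 ^ 2 / (y 0 ^ 2 * y 2 ^ 2 * y 5 ^ 2 * y 9)
def c02 (c : ℝ) (y : Fin 10 → ℝ) : ℝ :=
  c / y 0 + c * (y 1 ^ 2 / (y 0 ^ 2 * y 2)) + y 1 ^ 2 * y 4 ^ 2 / (y 0 ^ 2 * y 2 ^ 2 * y 5) +
    y 1 ^ 2 * y 4 ^ 2 * y 8 ^ 2 / (y 0 ^ 2 * y 2 ^ 2 * y 5 ^ 2 * y 9)
def c03 (c : ℝ) (y : Fin 10 → ℝ) : ℝ :=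
  c / y 0 + c * (y 1 ^ 2 / (y 0 ^ 2 * y 2)) +
    c * (y 1 ^ 2 * y 4 ^ 2 / (y 0 ^ 2 * y 2 ^ 2 * y 5)) +
    y 1 ^ 2 * y 4 ^ 2 * y 8 ^ 2 / (y 0 ^ 2 * y 2 ^ 2 * y 5 ^ 2 * y 9)

def ebar0 (c : ℝ) (y : Fin 10 → ℝ) : Fin 10 → ℝ :=
  ![(c01 c y / c0 y) * y 0, y 1, (c02 c y / c01 c y) * y 2, y 3, y 4,
    (c03 c y / c02 c y) * y 5, y 6, y 7, y 8, (c * c0 y / c03 c y) * y 9]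

def epsbar0 (y : Fin 10 → ℝ) : ℝ :=
  1 / y 0 + y 1 ^ 2 / (y 0 ^ 2 * y 2) + y 1 ^ 2 * y 4 ^ 2 / (y 0 ^ 2 * y 2 ^ 2 * y 5) +
    y 1 ^ 2 * y 4 ^ 2 * y 8 ^ 2 / (y 0 ^ 2 * y 2 ^ 2 * y 5 ^ 2 * y 9)

lemma key (A B C D c : ℝ) (hc : c ≠ 0)
    (h1 : A + B + C + D ≠ 0) (h2 : c * A + B + C + D ≠ 0)
    (h3 : c * A + c * B + C + D ≠ 0) (h4 : c * A + c * B + c * C + D ≠ 0) :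
    (A + B + C + D) / (c * A + B + C + D) * A
      + (A + B + C + D) ^ 2 / ((c * A + B + C + D) * (c * A + c * B + C + D)) * B
      + (A + B + C + D) ^ 2 / ((c * A + c * B + C + D) * (c * A + c * B + c * C + D)) * C
      + (A + B + C + D) / (c * (c * A + c * B + c * C + D)) * D
      = c⁻¹ * (A + B + C + D) := by
  rw [div_mul_eq_mul_div, div_mul_eq_mul_div, div_mul_eq_mul_div, div_mul_eq_mul_div,
    div_add_div _ _ h2 (mul_ne_zero h2 h3), div_add_div _ _ (mul_ne_zero h2 (mul_ne_zero h2 h3)) (mul_ne_zero h3 h4),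
    div_add_div _ _ (mul_ne_zero (mul_ne_zero h2 (mul_ne_zero h2 h3)) (mul_ne_zero h3 h4)) (mul_ne_zero hc h4),
    inv_mul_eq_div, div_eq_div_iff (by simp [*]) hc]
  ring

set_option maxHeartbeats 1000000 in
/-- `ε̄_0(ē_0^c(y)) = c⁻¹·ε̄_0(y)` for the `C_4^{(1)}`-geometric crystal on the
`V_2(y)`-side. -/
theorem eps0_e0 (y : Fin 10 → ℝ) (hy : ∀ i, 0 < y i) (c : ℝ) (hc : 0 < c) :
    epsbar0 (ebar0 c y) = c⁻¹ * epsbar0 y := by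
  have h0 := hy 0; have h1 := hy 1; have h2 := hy 2; have h4 := hy 4
  have h5 := hy 5; have h8 := hy 8; have h9 := hy 9
  set A : ℝ := 1 / y 0 with hA
  set B : ℝ := y 1 ^ 2 / (y 0 ^ 2 * y 2) with hB
  set C : ℝ := y 1 ^ 2 * y 4 ^ 2 / (y 0 ^ 2 * y 2 ^ 2 * y 5) with hC
  set D : ℝ := y 1 ^ 2 * y 4 ^ 2 * y 8 ^ 2 / (y 0 ^ 2 * y 2 ^ 2 * y 5 ^ 2 * y 9) with hD
  have hApos : 0 < A := by rw [hA]; positivity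
  have hBpos : 0 < B := by rw [hB]; positivity
  have hCpos : 0 < C := by rw [hC]; positivity
  have hDpos : 0 < D := by rw [hD]; positivity
  have hc0 : c0 y = A + B + C + D := rfl
  have hc01 : c01 c y = c * A + B + C + D := by
    rw [c01, hA, hB, hC, hD, mul_one_div]
  have hc02 : c02 c y = c * A + c * B + C + D := by
    rw [c02, hA, hB, hC, hD, mul_one_div]
  have hc03 : c03 c y = c * A + c * B + c * C + D := by
    rw [c03, hA, hB, hC, hD, mul_one_div]
  have hS1 : (0:ℝ) < c * A + B + C + D := by positivity
  have hS2 : (0:ℝ) < c * A + c * B + C + D := by positivity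
  have hS3 : (0:ℝ) < c * A + c * B + c * C + D := by positivity
  have hS : (0:ℝ) < A + B + C + D := by positivity
  have e0 : ebar0 c y 0 = (c01 c y / c0 y) * y 0 := rfl
  have e1 : ebar0 c y 1 = y 1 := rfl
  have e2 : ebar0 c y 2 = (c02 c y / c01 c y) * y 2 := rfl
  have e4 : ebar0 c y 4 = y 4 := rfl
  have e5 : ebar0 c y 5 = (c03 c y / c02 c y) * y 5 := rfl
  have e8 : ebar0 c y 8 = y 8 := rfl
  have e9 : ebar0 c y 9 = (c * c0 y / c03 c y) * y 9 := rfl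
  rw [epsbar0, e0, e1, e2, e4, e5, e8, e9, epsbar0]
  rw [hc0, hc01, hc02, hc03]
  have T1 : 1 / ((c * A + B + C + D) / (A + B + C + D) * y 0)
      = (A + B + C + D) / (c * A + B + C + D) * A := by
    rw [hA]; field_simp; try ring
  have T2 : y 1 ^ 2 / (((c * A + B + C + D) / (A + B + C + D) * y 0) ^ 2 *
        ((c * A + c * B + C + D) / (c * A + B + C + D) * y 2))
      = (A + B + C + D) ^ 2 / ((c * A + B + C + D) * (c * A + c * B + C + D)) * B := by
    rw [hB]; field_simp; try ring
  have T3 : y 1 ^ 2 * y 4 ^ 2 / (((c * A + B + C + D) / (A + B + C + D) * y 0) ^ 2 *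
        ((c * A + c * B + C + D) / (c * A + B + C + D) * y 2) ^ 2 *
        ((c * A + c * B + c * C + D) / (c * A + c * B + C + D) * y 5))
      = (A + B + C + D) ^ 2 /
          ((c * A + c * B + C + D) * (c * A + c * B + c * C + D)) * C := by
    rw [hC]; field_simp; try ring
  have T4 : y 1 ^ 2 * y 4 ^ 2 * y 8 ^ 2 /
        (((c * A + B + C + D) / (A + B + C + D) * y 0) ^ 2 *
          ((c * A + c * B + C + D) / (c * A + B + C + D) * y 2) ^ 2 *
          ((c * A + c * B + c * C + D) / (c * A + c * B + C + D) * y 5) ^ 2 *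
          (c * (A + B + C + D) / (c * A + c * B + c * C + D) * y 9))
      = (A + B + C + D) / (c * (c * A + c * B + c * C + D)) * D := by
    rw [hD]; field_simp; try ring
  rw [T1, T2, T3, T4, ← hA, ← hB, ← hC, ← hD]
  exact key A B C D c hc.ne' hS.ne' hS1.ne' hS2.ne' hS3.ne'

end

end Stmt13
end
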